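/- arXiv:math/0302106 — 6 statements merged into one kernel-verified Lean document; each statement's English description precedes it below -/
import Mathlib

section
/- Let W be a k-wheel with center v₀ and spokes v₁,…,v_k, and let T be a coupled spanning tree of W. Then at least one of the following holds: (a) for all i ∈ [1,k], v₀v_i ∈ T if and only if v_i v_{i+1} ∉ T; or (b) for all i ∈ [1,k], v₀v_i ∈ T if and only if v_{i-1} v_i ∉ T (spoke indices cyclic modulo k). -/
/-- The edge set of the `k`-wheel `W(v₀; v₁,…,v_k)`: the center is `none`,
the spokes are `some i` for `i : ZMod k` (cyclic indexing). -/
def wheelEdges (k : ℕ) : Set (Sym2 (Option (ZMod k))) :=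
  {e | ∃ i : ZMod k, e = s(none, some i) ∨ e = s(some i, some (i + 1))}

/-- `T` is a coupled spanning tree of the `k`-wheel. -/
def IsCoupledTree (k : ℕ) (T : Set (Sym2 (Option (ZMod k)))) : Prop :=
  T ⊆ wheelEdges k ∧ (SimpleGraph.fromEdgeSet T).IsTree ∧
    (SimpleGraph.fromEdgeSet (wheelEdges k \ T)).IsTree

/-!
Root both `T` and its complement at the centre. The spoke at a rim vertex `i` lies in exactly one
of the two trees, so in the other tree the parent of `i` is a rim neighbour `i ± 1`: call it the
rim parent of `i`. If `i` and `i + 1` were each other's rim parent, the chord between them would lie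
in the tree opposite both spokes, so they would be each other's parent in one tree, which is
impossible. Hence a rim vertex pointing forward forces its successor to point forward, and going
round the cycle, either every rim vertex points forward, which is (a), or every one points
backward, which is (b).
-/

namespace SimpleGraph.IsTree

open Walk

variable {V : Type*} {G : SimpleGraph V} (hG : G.IsTree) (r : V)

noncomputable def pathToRoot (u : V) : G.Walk u r := (hG.existsUnique_path u r).choose

lemma isPath_pathToRoot (u : V) : (hG.pathToRoot r u).IsPath :=
  (hG.existsUnique_path u r).choose_spec.1

lemma eq_pathToRoot {u : V} {p : G.Walk u r} (hp : p.IsPath) : p = hG.pathToRoot r u :=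
  (hG.existsUnique_path u r).choose_spec.2 p hp

noncomputable def parent (u : V) : V := (hG.pathToRoot r u).snd

variable {r}

lemma not_nil_pathToRoot {u : V} (hu : u ≠ r) : ¬ (hG.pathToRoot r u).Nil :=
  fun h => hu h.eq

lemma adj_parent {u : V} (hu : u ≠ r) : G.Adj u (hG.parent r u) :=
  adj_snd (hG.not_nil_pathToRoot hu)

lemma parent_eq_of_adj {u : V} (h : G.Adj u r) : hG.parent r u = r := by
  rw [parent, ← hG.eq_pathToRoot r (p := cons h nil) (by simp [h.ne])]
  simp

lemma parent_root : hG.parent r r = r := by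
  rw [parent, ← hG.eq_pathToRoot r (p := nil) .nil]
  simp

lemma length_pathToRoot_parent {u : V} (hu : u ≠ r) :
    (hG.pathToRoot r (hG.parent r u)).length + 1 = (hG.pathToRoot r u).length := by
  rw [← length_tail_add_one (hG.not_nil_pathToRoot hu),
    hG.eq_pathToRoot r (hG.isPath_pathToRoot r u).tail]
  rfl

lemma parent_parent_ne {u : V} (hu : u ≠ r) : hG.parent r (hG.parent r u) ≠ u := by
  intro h
  have hpu : hG.parent r u ≠ r := by
    rintro hr
    rw [hr, parent_root] at h
    exact hu h.symm
  have h₁ := hG.length_pathToRoot_parent hu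
  have h₂ := hG.length_pathToRoot_parent hpu
  rw [h] at h₂
  omega

end SimpleGraph.IsTree

theorem ZMod.forall_of_add_one {k : ℕ} [NeZero k] {P : ZMod k → Prop}
    (hP : ∀ i, P i → P (i + 1)) {i : ZMod k} (hi : P i) (j : ZMod k) : P j := by
  have key : ∀ n : ℕ, P (i + n) := by
    intro n
    induction n with
    | zero => simpa using hi
    | succ n ih => simpa [add_assoc] using hP _ ih
  simpa using key (j - i).val

theorem ZMod.forall_or_forall_of_not_and {k : ℕ} [NeZero k] {P Q : ZMod k → Prop}
    (hPQ : ∀ i, P i ∨ Q i) (hP : ∀ i, ¬ (P i ∧ Q (i + 1))) : (∀ i, P i) ∨ (∀ i, Q i) := by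
  by_cases h : ∃ i, P i
  · obtain ⟨i, hi⟩ := h
    refine Or.inl (ZMod.forall_of_add_one (fun j hj => ?_) hi)
    exact (hPQ (j + 1)).resolve_right fun hq => hP j ⟨hj, hq⟩
  · push Not at h
    exact Or.inr fun i => (hPQ i).resolve_left (h i)

section Wheel

open SimpleGraph

variable {k : ℕ}

lemma eq_of_mk_some_mem_wheelEdges {i : ZMod k} {x : Option (ZMod k)}
    (h : s(some i, x) ∈ wheelEdges k) : x = none ∨ x = some (i + 1) ∨ x = some (i - 1) := by
  obtain ⟨j, hj | hj⟩ := h <;>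
    simp only [Sym2.eq_iff, Option.some.injEq, reduceCtorEq, false_and, false_or] at hj
  · exact Or.inl hj.2
  · rcases hj with ⟨rfl, rfl⟩ | ⟨rfl, rfl⟩
    · exact Or.inr (Or.inl rfl)
    · exact Or.inr (Or.inr (by simp))

section Tree

variable {E : Set (Sym2 (Option (ZMod k)))} (hE : (fromEdgeSet E).IsTree)

lemma mk_some_parent_mem (i : ZMod k) : s(some i, hE.parent none (some i)) ∈ E :=
  ((fromEdgeSet_adj E).1 (hE.adj_parent (Option.some_ne_none i))).1

lemma parent_some_eq_none_iff (i : ZMod k) :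
    hE.parent none (some i) = none ↔ s(none, some i) ∈ E :=
  ⟨fun h => by simpa [h, Sym2.eq_swap] using mk_some_parent_mem hE i,
    fun h => hE.parent_eq_of_adj ((fromEdgeSet_adj E).2 ⟨by rwa [Sym2.eq_swap], by simp⟩)⟩

end Tree

namespace IsCoupledTree

variable {T : Set (Sym2 (Option (ZMod k)))} (hT : IsCoupledTree k T)

open scoped Classical in
noncomputable def rimParent (i : ZMod k) : Option (ZMod k) :=
  if s(none, some i) ∈ T then hT.2.2.parent none (some i) else hT.2.1.parent none (some i)

lemma mk_rimParent_mem_iff (i : ZMod k) :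
    s(some i, hT.rimParent i) ∈ T ↔ s(none, some i) ∉ T := by
  unfold rimParent
  split_ifs with h
  · simpa [h] using (mk_some_parent_mem hT.2.2 i).2
  · simpa [h] using mk_some_parent_mem hT.2.1 i

lemma rimParent_eq_add_one_or_sub_one (i : ZMod k) :
    hT.rimParent i = some (i + 1) ∨ hT.rimParent i = some (i - 1) := by
  have hW : s(some i, hT.rimParent i) ∈ wheelEdges k := by
    unfold rimParent
    split_ifs
    · exact (mk_some_parent_mem hT.2.2 i).1
    · exact hT.1 (mk_some_parent_mem hT.2.1 i)
  refine (eq_of_mk_some_mem_wheelEdges hW).resolve_left fun h => ?_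
  unfold rimParent at h
  split_ifs at h with hs
  · exact ((parent_some_eq_none_iff hT.2.2 i).1 h).2 hs
  · exact hs ((parent_some_eq_none_iff hT.2.1 i).1 h)

lemma rimParent_add_one_ne (i : ZMod k) (h : hT.rimParent i = some (i + 1)) :
    hT.rimParent (i + 1) ≠ some i := by
  intro h'
  have hchord := hT.mk_rimParent_mem_iff i
  have hspokes := hT.mk_rimParent_mem_iff (i + 1)
  rw [h] at hchord
  rw [h', Sym2.eq_swap, hchord] at hspokes
  unfold rimParent at h h'
  split_ifs at h h' with hi hi'
  · exact hT.2.2.parent_parent_ne (Option.some_ne_none i) (by rw [h, h'])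
  · tauto
  · tauto
  · exact hT.2.1.parent_parent_ne (Option.some_ne_none i) (by rw [h, h'])

end IsCoupledTree

end Wheel

theorem stmt1 (k : ℕ) (hk : 3 ≤ k) (T : Set (Sym2 (Option (ZMod k))))
    (hT : IsCoupledTree k T) :
    (∀ i : ZMod k, s(none, some i) ∈ T ↔ s(some i, some (i + 1)) ∉ T) ∨
    (∀ i : ZMod k, s(none, some i) ∈ T ↔ s(some (i - 1), some i) ∉ T) := by
  have : NeZero k := ⟨by omega⟩
  have hstep (i : ZMod k) :
      ¬ (hT.rimParent i = some (i + 1) ∧ hT.rimParent (i + 1) = some (i + 1 - 1)) := by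
    rw [add_sub_cancel_right]
    exact fun ⟨h, h'⟩ => hT.rimParent_add_one_ne i h h'
  rcases ZMod.forall_or_forall_of_not_and hT.rimParent_eq_add_one_or_sub_one hstep
    with hfwd | hbwd
  · left
    intro i
    rw [iff_not_comm, ← hT.mk_rimParent_mem_iff i, hfwd i]
  · right
    intro i
    rw [iff_not_comm, ← hT.mk_rimParent_mem_iff i, hbwd i, Sym2.eq_swap]
end

section
/- Let W be a k-wheel and let d : [1,k] → {1,2} be a nonconstant function. Then there exist exactly two coupled spanning trees T of W such that for every spoke v_i, the number of edges of T incident to v_i equals d(i). -/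
/-- The valence of a vertex `x` with respect to an edge set `T`: the number of
edges of `T` incident to `x`. -/
noncomputable def valOf {k : ℕ} (T : Set (Sym2 (Option (ZMod k))))
    (x : Option (ZMod k)) : ℕ :=
  {e ∈ T | x ∈ e}.ncard

namespace SimpleGraph

theorem Connected.mem_of_forall_adj_mem {V : Type*} {G : SimpleGraph V} (hG : G.Connected)
    {A : Set V} (hA : ∀ u v, G.Adj u v → u ∈ A → v ∈ A) {x : V} (hx : x ∈ A) (y : V) :
    y ∈ A := by
  by_contra hy
  obtain ⟨p⟩ := hG x y
  obtain ⟨D, -, hD, hD'⟩ := p.exists_boundary_dart A hx hy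
  exact hD' (hA _ _ D.adj hD)

theorem isTree_fromEdgeSet_range_parent {α : Type*} [Finite α] (p : α → Option α)
    (f : Option α → ℕ) (hf : ∀ a, f (p a) < f (some a)) :
    (fromEdgeSet (Set.range fun a => s(some a, p a))).IsTree := by
  set G := fromEdgeSet (Set.range fun a => s(some a, p a))
  have hne : ∀ a, p a ≠ some a := fun a h => (hf a).ne (by rw [h])
  have hadj : ∀ a, G.Adj (some a) (p a) := fun a => (fromEdgeSet_adj _).2 ⟨⟨a, rfl⟩, (hne a).symm⟩
  have hreach : ∀ n v, f v = n → G.Reachable v none := by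
    intro n
    induction n using Nat.strong_induction_on with
    | _ n ih =>
      rintro (_ | a) rfl
      · rfl
      · exact (hadj a).reachable.trans (ih _ (hf a) _ rfl)
  have hinj : Function.Injective fun a => s(some a, p a) := by
    intro a b hab
    rcases Sym2.eq_iff.1 hab with ⟨h, -⟩ | ⟨h₁, h₂⟩
    · exact Option.some_inj.1 h
    · exact (lt_asymm (h₂ ▸ hf a) (h₁ ▸ hf b)).elim
  have hedges : G.edgeSet = Set.range fun a => s(some a, p a) := by
    rw [edgeSet_fromEdgeSet, sdiff_eq_left, Set.disjoint_left]
    rintro _ ⟨a, rfl⟩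
    simpa using (hne a).symm
  rw [isTree_iff_connected_and_card, connected_iff_exists_forall_reachable, hedges,
    Nat.card_range_of_injective hinj, Finite.card_option]
  exact ⟨⟨none, fun v => (hreach _ v rfl).symm⟩, rfl⟩

end SimpleGraph

theorem ZMod.val_sub_one_lt {n : ℕ} [NeZero n] {x : ZMod n} (hx : x ≠ 0) : (x - 1).val < x.val := by
  have hn : 1 < n := by
    by_contra h
    have : n = 1 := by have := NeZero.pos n; omega
    subst this
    exact hx (Subsingleton.elim _ _)
  have : Fact (1 < n) := ⟨hn⟩
  have hx' := (ZMod.val_ne_zero x).2 hx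
  rw [ZMod.val_sub (by rw [ZMod.val_one]; omega), ZMod.val_one]
  omega

theorem ZMod.eq_of_forall_add_one_eq {n : ℕ} [NeZero n] {β : Type*} {f : ZMod n → β}
    (hf : ∀ i, f (i + 1) = f i) (i j : ZMod n) : f i = f j := by
  have key : ∀ m : ℕ, f (i + m) = f i := by
    intro m
    induction m with
    | zero => simp
    | succ m ih => rw [Nat.cast_succ, ← add_assoc, hf, ih]
  simpa using (key (j - i).val).symm

theorem ZMod.two_ne_zero_of_three_le {k : ℕ} (hk : 3 ≤ k) : (2 : ZMod k) ≠ 0 := by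
  intro h
  have := Nat.le_of_dvd two_pos ((ZMod.natCast_eq_zero_iff 2 k).1 (by exact_mod_cast h))
  omega

section Wheel

open SimpleGraph

variable {k : ℕ}

theorem none_some_mem_wheelEdges (i : ZMod k) : s(none, some i) ∈ wheelEdges k :=
  ⟨i, Or.inl rfl⟩

theorem some_some_mem_wheelEdges_iff {x y : ZMod k} :
    s(some x, some y) ∈ wheelEdges k ↔ y = x + 1 ∨ x = y + 1 := by
  constructor
  · rintro ⟨i, h | h⟩
    · simp at h
    · rcases Sym2.eq_iff.1 h with ⟨h₁, h₂⟩ | ⟨h₁, h₂⟩ <;> simp_all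
  · rintro (rfl | rfl)
    · exact ⟨x, Or.inr rfl⟩
    · exact ⟨y, Or.inr Sym2.eq_swap⟩

theorem eq_of_mem_wheelEdges_of_mem {e : Sym2 (Option (ZMod k))} (he : e ∈ wheelEdges k)
    {i : ZMod k} (hi : some i ∈ e) :
    e = s(none, some i) ∨ e = s(some i, some (i + 1)) ∨ e = s(some i, some (i - 1)) := by
  obtain ⟨j, rfl | rfl⟩ := he
  · simp_all
  · rcases Sym2.mem_iff.1 hi with h | h <;> simp only [Option.some_inj] at h <;> subst h
    · simp
    · simp [Sym2.eq_swap]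

theorem some_some_add_mem_wheelEdges {ε : ZMod k} (hε : ε = 1 ∨ ε = -1) (i : ZMod k) :
    s(some i, some (i + ε)) ∈ wheelEdges k := by
  rw [some_some_mem_wheelEdges_iff]
  rcases hε with rfl | rfl
  · exact Or.inl rfl
  · exact Or.inr (by ring)

open Classical in
theorem valOf_some_eq (hk : 3 ≤ k) {T : Set (Sym2 (Option (ZMod k)))} (hT : T ⊆ wheelEdges k)
    (i : ZMod k) :
    valOf T (some i) = (if s(none, some i) ∈ T then 1 else 0) +
      (if s(some i, some (i + 1)) ∈ T then 1 else 0) +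
      (if s(some i, some (i - 1)) ∈ T then 1 else 0) := by
  have h2 := ZMod.two_ne_zero_of_three_le hk
  have hdistinct : s(some i, some (i + 1)) ≠ s(some i, some (i - 1)) := by
    intro h
    rcases Sym2.eq_iff.1 h with ⟨-, h⟩ | ⟨h, -⟩ <;> simp only [Option.some_inj] at h
    · exact h2 (by linear_combination h)
    · exact h2 (by linear_combination 2 * h)
  have hset : {e ∈ T | some i ∈ e} =
      ↑(({s(none, some i), s(some i, some (i + 1)), s(some i, some (i - 1))} :
        Finset (Sym2 (Option (ZMod k)))).filter (· ∈ T)) := by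
    ext e
    simp only [Set.mem_ofPred_eq, Finset.coe_filter, Finset.mem_insert, Finset.mem_singleton]
    constructor
    · rintro ⟨heT, hi⟩
      exact ⟨eq_of_mem_wheelEdges_of_mem (hT heT) hi, heT⟩
    · rintro ⟨rfl | rfl | rfl, heT⟩ <;> exact ⟨heT, by simp⟩
  rw [valOf, hset, Set.ncard_coe_finset, Finset.card_filter, Finset.sum_insert (by simp),
    Finset.sum_insert (by simpa using hdistinct), Finset.sum_singleton, add_assoc]

def Oriented (ε : ZMod k) (T : Set (Sym2 (Option (ZMod k)))) (i : ZMod k) : Prop :=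
  s(none, some i) ∈ T ↔ s(some i, some (i + ε)) ∉ T

theorem oriented_sdiff_iff {ε : ZMod k} {T : Set (Sym2 (Option (ZMod k)))} {i : ZMod k}
    (hε : ε = 1 ∨ ε = -1) : Oriented ε (wheelEdges k \ T) i ↔ Oriented ε T i := by
  simp only [Oriented, Set.mem_sdiff, none_some_mem_wheelEdges,
    some_some_add_mem_wheelEdges hε, true_and]
  tauto

open Classical in
theorem valOf_some_eq_of_oriented (hk : 3 ≤ k) {T : Set (Sym2 (Option (ZMod k)))}
    (hT : T ⊆ wheelEdges k) {ε : ZMod k} (hε : ε = 1 ∨ ε = -1) {i : ZMod k}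
    (h : Oriented ε T i) : valOf T (some i) = 1 + if s(some i, some (i - ε)) ∈ T then 1 else 0 := by
  rw [valOf_some_eq hk hT]
  rcases hε with rfl | rfl
  · simp only [Oriented] at h
    split_ifs <;> tauto
  · simp only [Oriented, ← sub_eq_add_neg] at h
    rw [sub_neg_eq_add]
    split_ifs <;> tauto

theorem not_connected_of_isolated_run {S : Set (Sym2 (Option (ZMod k)))}
    (hS : S ⊆ wheelEdges k) (a : ZMod k) (n : ℕ)
    (hrad : ∀ q ≤ n, s(none, some (a + q)) ∉ S) (hleft : s(some (a - 1), some a) ∉ S)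
    (hright : s(some (a + n), some (a + n + 1)) ∉ S) : ¬ (fromEdgeSet S).Connected := by
  intro hconn
  set A : Set (Option (ZMod k)) := {v | ∃ q ≤ n, v = some (a + q)}
  have hclosed : ∀ u v, (fromEdgeSet S).Adj u v → u ∈ A → v ∈ A := by
    rintro u (_ | y) huv ⟨q, hq, rfl⟩ <;> obtain ⟨hmem, -⟩ := (fromEdgeSet_adj _).1 huv
    · exact absurd (Sym2.eq_swap ▸ hmem) (hrad q hq)
    rcases some_some_mem_wheelEdges_iff.1 (hS hmem) with rfl | hy
    · rcases hq.lt_or_eq with hq | rfl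
      · exact ⟨q + 1, hq, by push_cast; ring_nf⟩
      · exact absurd hmem hright
    · rcases q with _ | q
      · have : y = a - 1 := by simpa [eq_sub_iff_add_eq] using hy.symm
        subst this
        exact absurd (Sym2.eq_swap ▸ hmem) (by simpa using hleft)
      · exact ⟨q, by omega, by rw [eq_sub_of_add_eq hy.symm]; push_cast; ring_nf⟩
  obtain ⟨q, -, hq⟩ := hconn.mem_of_forall_adj_mem hclosed (x := some a)
    ⟨0, Nat.zero_le n, by simp⟩ none
  cases hq

theorem oriented_neg_one_or_oriented_one {T : Set (Sym2 (Option (ZMod k)))}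
    (hT : T ⊆ wheelEdges k) (hconn : (fromEdgeSet T).Connected)
    (hconn' : (fromEdgeSet (wheelEdges k \ T)).Connected) (i : ZMod k) :
    Oriented (-1) T i ∨ Oriented 1 T i := by
  have hout := not_connected_of_isolated_run hT i 0
  have hin := not_connected_of_isolated_run (S := wheelEdges k \ T) Set.sdiff_subset i 0
  simp only [Nat.cast_zero, add_zero, Set.mem_sdiff, none_some_mem_wheelEdges,
    some_some_mem_wheelEdges_iff, true_and, not_not, nonpos_iff_eq_zero, forall_eq] at hout hin
  have hl : s(some (i - 1), some i) = s(some i, some (i + -1)) := by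
    rw [Sym2.eq_swap, ← sub_eq_add_neg]
  simp only [Oriented, ← hl]
  tauto

theorem chord_swap_add_one (x : ZMod k) :
    s(some (x + 1), some (x + 1 + -1)) = s(some x, some (x + 1)) := by
  rw [Sym2.eq_swap]
  ring_nf

theorem chord_mem_of_oriented_run {T : Set (Sym2 (Option (ZMod k)))} (a : ZMod k) (n : ℕ)
    (hmid : ∀ q : ℕ, 1 ≤ q → q ≤ n → Oriented (-1) T (a + q) ∧ Oriented 1 T (a + q))
    (hmem : s(some a, some (a + 1)) ∈ T) : ∀ q ≤ n, s(some (a + q), some (a + q + 1)) ∈ T := by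
  intro q
  induction q with
  | zero => exact fun _ => by simpa using hmem
  | succ q ih =>
    intro hq
    obtain ⟨h₁, h₂⟩ := hmid (q + 1) (by omega) hq
    simp only [Oriented, Nat.cast_succ, ← add_assoc, chord_swap_add_one] at h₁ h₂ ⊢
    have := ih (by omega)
    tauto

theorem oriented_one_of_forward_run_of_mem {T : Set (Sym2 (Option (ZMod k)))}
    (hT : T ⊆ wheelEdges k) (hconn : (fromEdgeSet T).Connected)
    (hsplit : ∀ i, Oriented (-1) T i ∨ Oriented 1 T i) (a : ZMod k) (n : ℕ)
    (ha : ¬ Oriented (-1) T a)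
    (hmid : ∀ q : ℕ, 1 ≤ q → q ≤ n → Oriented (-1) T (a + q) ∧ Oriented 1 T (a + q))
    (hmem : s(some a, some (a + 1)) ∈ T) : Oriented 1 T (a + (n + 1 : ℕ)) := by
  have hchord := chord_mem_of_oriented_run a n hmid hmem
  have hrad0 : s(none, some a) ∉ T := by
    have := (hsplit a).resolve_left ha
    simp only [Oriented] at this
    tauto
  by_contra hR
  have hradE : s(none, some (a + (n + 1 : ℕ))) ∉ T := by
    have h := (hsplit (a + (n + 1 : ℕ))).resolve_right hR
    have := hchord n le_rfl
    simp only [Oriented, Nat.cast_succ, ← add_assoc, chord_swap_add_one] at h this ⊢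
    tauto
  refine not_connected_of_isolated_run hT a (n + 1) (fun q hq => ?_) ?_ ?_ hconn
  · rcases Nat.eq_zero_or_pos q with rfl | hq0
    · simpa using hrad0
    rcases hq.lt_or_eq with hq | rfl
    · have h := (hmid q hq0 (by omega)).2
      have := hchord q (by omega)
      simp only [Oriented] at h
      tauto
    · exact hradE
  · simp only [Oriented, sub_eq_add_neg, Sym2.eq_swap (a := some (a + -1))] at ha ⊢
    tauto
  · simp only [Oriented] at hR
    tauto

theorem oriented_one_of_forward_run {T : Set (Sym2 (Option (ZMod k)))}
    (hT : T ⊆ wheelEdges k) (hconn : (fromEdgeSet T).Connected)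
    (hconn' : (fromEdgeSet (wheelEdges k \ T)).Connected) (a : ZMod k) (n : ℕ)
    (ha : ¬ Oriented (-1) T a)
    (hmid : ∀ q : ℕ, 1 ≤ q → q ≤ n → Oriented (-1) T (a + q) ∧ Oriented 1 T (a + q)) :
    Oriented 1 T (a + (n + 1 : ℕ)) := by
  have hsplit := oriented_neg_one_or_oriented_one hT hconn hconn'
  by_cases hmem : s(some a, some (a + 1)) ∈ T
  · exact oriented_one_of_forward_run_of_mem hT hconn hsplit a n ha hmid hmem
  have hneg (i : ZMod k) : Oriented (-1) (wheelEdges k \ T) i ↔ Oriented (-1) T i :=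
    oriented_sdiff_iff (Or.inr rfl)
  have hone (i : ZMod k) : Oriented 1 (wheelEdges k \ T) i ↔ Oriented 1 T i :=
    oriented_sdiff_iff (Or.inl rfl)
  rw [← hone]
  exact oriented_one_of_forward_run_of_mem Set.sdiff_subset hconn' (by simpa [hneg, hone])
    a n (by rwa [hneg]) (by simpa [hneg, hone])
    ⟨some_some_add_mem_wheelEdges (Or.inl rfl) a, hmem⟩

theorem forall_oriented_neg_one_or_forall_oriented_one [NeZero k]
    {T : Set (Sym2 (Option (ZMod k)))} (hT : T ⊆ wheelEdges k)
    (hconn : (fromEdgeSet T).Connected) (hconn' : (fromEdgeSet (wheelEdges k \ T)).Connected) :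
    (∀ i, Oriented (-1) T i) ∨ ∀ i, Oriented 1 T i := by
  classical
  by_contra! h
  obtain ⟨⟨a, ha⟩, b, hb⟩ := h
  have hex : ∃ n : ℕ, ∃ a, ¬ Oriented (-1) T a ∧ ¬ Oriented 1 T (a + (n + 1 : ℕ)) :=
    ⟨(b - a - 1).val, a, ha, by simpa using hb⟩
  obtain ⟨a, ha, hb⟩ := Nat.find_spec hex
  refine hb (oriented_one_of_forward_run hT hconn hconn' a _ ha fun q hq1 hqn => ⟨?_, ?_⟩)
  · by_contra h
    refine Nat.find_min hex (m := Nat.find hex - q) (by omega) ⟨a + q, h, ?_⟩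
    rwa [add_assoc, ← Nat.cast_add, show q + (Nat.find hex - q + 1) = Nat.find hex + 1 by omega]
  · by_contra h
    refine Nat.find_min hex (m := q - 1) (by omega) ⟨a, ha, ?_⟩
    rwa [show q - 1 + 1 = q by omega]

def wheelParent (ε : ZMod k) (d : ZMod k → ℕ) (i : ZMod k) : Option (ZMod k) :=
  if d (i + ε) = 1 then none else some (i + ε)

def parentTree (ε : ZMod k) (d : ZMod k → ℕ) : Set (Sym2 (Option (ZMod k))) :=
  Set.range fun i => s(some i, wheelParent ε d i)

variable {ε : ZMod k} {d : ZMod k → ℕ}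

theorem none_some_mem_parentTree_iff {i : ZMod k} :
    s(none, some i) ∈ parentTree ε d ↔ d (i + ε) = 1 := by
  constructor
  · rintro ⟨j, hj⟩
    dsimp only [wheelParent] at hj
    split_ifs at hj with h
    · rcases Sym2.eq_iff.1 hj with ⟨h', -⟩ | ⟨-, h'⟩ <;> simp_all
    · simp at hj
  · intro h
    exact ⟨i, by simp [wheelParent, h, Sym2.eq_swap]⟩

theorem some_some_mem_parentTree_iff (hk : 3 ≤ k) (hε : ε = 1 ∨ ε = -1) {i : ZMod k} :
    s(some i, some (i + ε)) ∈ parentTree ε d ↔ d (i + ε) ≠ 1 := by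
  constructor
  · rintro ⟨j, hj⟩
    dsimp only [wheelParent] at hj
    split_ifs at hj with h
    · simp at hj
    rcases Sym2.eq_iff.1 hj with ⟨h₁, -⟩ | ⟨h₁, h₂⟩ <;> simp only [Option.some_inj] at h₁
    · rwa [← h₁]
    · rw [h₁, Option.some_inj] at h₂
      have : (2 : ZMod k) = 0 := by
        rcases hε with rfl | rfl
        · linear_combination h₂
        · linear_combination -h₂
      exact absurd this (ZMod.two_ne_zero_of_three_le hk)
  · intro h
    exact ⟨i, by simp [wheelParent, h]⟩

theorem parentTree_subset_wheelEdges (hε : ε = 1 ∨ ε = -1) : parentTree ε d ⊆ wheelEdges k := by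
  rintro _ ⟨i, rfl⟩
  dsimp only [wheelParent]
  split_ifs
  · exact Sym2.eq_swap ▸ none_some_mem_wheelEdges i
  · exact some_some_add_mem_wheelEdges hε i

theorem oriented_parentTree (hk : 3 ≤ k) (hε : ε = 1 ∨ ε = -1) (i : ZMod k) :
    Oriented ε (parentTree ε d) i := by
  rw [Oriented, none_some_mem_parentTree_iff, some_some_mem_parentTree_iff hk hε, not_not]

theorem eq_of_subset_wheelEdges (hε : ε = 1 ∨ ε = -1) {S S' : Set (Sym2 (Option (ZMod k)))}
    (hS : S ⊆ wheelEdges k) (hS' : S' ⊆ wheelEdges k)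
    (hrad : ∀ i, s(none, some i) ∈ S ↔ s(none, some i) ∈ S')
    (hchord : ∀ i, s(some i, some (i + ε)) ∈ S ↔ s(some i, some (i + ε)) ∈ S') : S = S' := by
  suffices h : ∀ e ∈ wheelEdges k, e ∈ S ↔ e ∈ S' from
    Set.ext fun e => ⟨fun he => (h e (hS he)).1 he, fun he => (h e (hS' he)).2 he⟩
  rintro e ⟨i, rfl | rfl⟩
  · exact hrad i
  · rcases hε with rfl | rfl
    · exact hchord i
    · simpa [Sym2.eq_swap] using hchord (i + 1)

theorem eq_parentTree (hk : 3 ≤ k) {T : Set (Sym2 (Option (ZMod k)))} (hT : T ⊆ wheelEdges k)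
    (hε : ε = 1 ∨ ε = -1) (hval : ∀ i, valOf T (some i) = d i) (hor : ∀ i, Oriented ε T i) :
    T = parentTree ε d := by
  have hchord : ∀ i, s(some i, some (i + ε)) ∈ T ↔ d (i + ε) ≠ 1 := by
    intro i
    have h := valOf_some_eq_of_oriented hk hT hε (hor (i + ε))
    rw [hval, add_sub_cancel_right, Sym2.eq_swap] at h
    split_ifs at h with hi <;> simp [hi, h]
  refine eq_of_subset_wheelEdges hε hT (parentTree_subset_wheelEdges hε) (fun i => ?_)
    (fun i => by rw [hchord, some_some_mem_parentTree_iff hk hε])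
  have h := hor i
  rw [Oriented] at h
  rw [h, hchord, none_some_mem_parentTree_iff, not_not]

theorem valOf_parentTree (hk : 3 ≤ k) (hε : ε = 1 ∨ ε = -1) (hd : ∀ i, d i = 1 ∨ d i = 2)
    (i : ZMod k) : valOf (parentTree ε d) (some i) = d i := by
  rw [valOf_some_eq_of_oriented hk (parentTree_subset_wheelEdges hε) hε
    (oriented_parentTree hk hε i)]
  have h := some_some_mem_parentTree_iff hk hε (i := i - ε) (d := d)
  rw [sub_add_cancel, Sym2.eq_swap] at h
  split_ifs with hi <;> rcases hd i with h' | h' <;> simp_all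

theorem sdiff_parentTree (hk : 3 ≤ k) (hε : ε = 1 ∨ ε = -1) (hd : ∀ i, d i = 1 ∨ d i = 2) :
    wheelEdges k \ parentTree ε d = parentTree ε (fun i => 3 - d i) := by
  refine eq_of_subset_wheelEdges hε Set.sdiff_subset (parentTree_subset_wheelEdges hε)
    (fun i => ?_) (fun i => ?_)
  · rw [Set.mem_sdiff, none_some_mem_parentTree_iff, none_some_mem_parentTree_iff]
    have := hd (i + ε)
    simp only [none_some_mem_wheelEdges, true_and]
    omega
  · rw [Set.mem_sdiff, some_some_mem_parentTree_iff hk hε, some_some_mem_parentTree_iff hk hε]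
    have := hd (i + ε)
    simp only [some_some_add_mem_wheelEdges hε, true_and]
    omega

theorem isTree_parentTree [NeZero k] (hε : ε = 1 ∨ ε = -1) (hd : ∃ w, d w = 1) :
    (fromEdgeSet (parentTree ε d)).IsTree := by
  obtain ⟨w, hw⟩ := hd
  have hεε : ε * ε = 1 := by rcases hε with rfl | rfl <;> ring
  -- the parent chain from spoke `i` takes at most `(ε * (w - i) - 1).val` rim steps before the
  -- spoke `w - ε`, whose parent is the hub
  refine isTree_fromEdgeSet_range_parent _ (fun v => v.elim 0 fun i => (ε * (w - i) - 1).val + 1)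
    fun i => ?_
  dsimp only [wheelParent]
  split_ifs with h
  · simp
  have hx : ε * (w - i) - 1 ≠ 0 := by
    intro hx
    exact h (by rw [show i + ε = w by linear_combination -ε * hx + (w - i) * hεε, hw])
  have := ZMod.val_sub_one_lt hx
  simp only [Option.elim]
  rw [show ε * (w - (i + ε)) - 1 = ε * (w - i) - 1 - 1 by linear_combination -hεε]
  omega

theorem isCoupledTree_parentTree [NeZero k] (hk : 3 ≤ k) (hε : ε = 1 ∨ ε = -1)
    (hd : ∀ i, d i = 1 ∨ d i = 2) (h₁ : ∃ w, d w = 1) (h₂ : ∃ w, d w = 2) :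
    IsCoupledTree k (parentTree ε d) := by
  refine ⟨parentTree_subset_wheelEdges hε, isTree_parentTree hε h₁, ?_⟩
  obtain ⟨w, hw⟩ := h₂
  rw [sdiff_parentTree hk hε hd]
  exact isTree_parentTree hε ⟨w, by simp [hw]⟩

theorem parentTree_neg_one_ne_parentTree_one (hk : 3 ≤ k) (hd : ∀ i, d i = 1 ∨ d i = 2)
    (hnonconst : ∃ i j, d i ≠ d j) : parentTree (-1) d ≠ parentTree 1 d := by
  have : NeZero k := ⟨by omega⟩
  intro h
  obtain ⟨i, j, hij⟩ := hnonconst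
  refine hij (ZMod.eq_of_forall_add_one_eq (fun i => ?_) i j)
  have h₁ := some_some_mem_parentTree_iff hk (Or.inl rfl) (i := i) (d := d)
  have h₂ := some_some_mem_parentTree_iff hk (Or.inr rfl) (i := i + 1) (d := d)
  rw [add_neg_cancel_right, Sym2.eq_swap, h] at h₂
  rcases hd i with h' | h' <;> rcases hd (i + 1) with h'' | h'' <;> simp_all

end Wheel

theorem stmt2 (k : ℕ) (hk : 3 ≤ k) (d : ZMod k → ℕ)
    (hvals : ∀ i, d i = 1 ∨ d i = 2) (hnonconst : ∃ i j, d i ≠ d j) :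
    {T : Set (Sym2 (Option (ZMod k))) |
      IsCoupledTree k T ∧ ∀ i : ZMod k, valOf T (some i) = d i}.ncard = 2 := by
  have : NeZero k := ⟨by omega⟩
  have hvalues : (∃ w, d w = 1) ∧ ∃ w, d w = 2 := by
    obtain ⟨i, j, hij⟩ := hnonconst
    rcases hvals i with hi | hi <;> rcases hvals j with hj | hj
    · exact absurd (hi.trans hj.symm) hij
    · exact ⟨⟨i, hi⟩, j, hj⟩
    · exact ⟨⟨j, hj⟩, i, hi⟩
    · exact absurd (hi.trans hj.symm) hij
  have hsolution : ∀ ε : ZMod k, ε = 1 ∨ ε = -1 →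
      IsCoupledTree k (parentTree ε d) ∧ ∀ i, valOf (parentTree ε d) (some i) = d i :=
    fun ε hε => ⟨isCoupledTree_parentTree hk hε hvals hvalues.1 hvalues.2,
      valOf_parentTree hk hε hvals⟩
  have hset : {T : Set (Sym2 (Option (ZMod k))) |
      IsCoupledTree k T ∧ ∀ i : ZMod k, valOf T (some i) = d i} =
      {parentTree (-1) d, parentTree 1 d} := by
    ext T
    constructor
    · rintro ⟨⟨hT, htree, htree'⟩, hval⟩
      exact (forall_oriented_neg_one_or_forall_oriented_one hT htree.1 htree'.1).imp
        (eq_parentTree hk hT (Or.inr rfl) hval) (eq_parentTree hk hT (Or.inl rfl) hval)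
    · rintro (rfl | rfl)
      exacts [hsolution _ (Or.inr rfl), hsolution _ (Or.inl rfl)]
  rw [hset, Set.ncard_pair (parentTree_neg_one_ne_parentTree_one hk hvals hnonconst)]
end

section
/- Every k-wheel (k ≥ 3) has exactly 2^{k+1} − 4 coupled spanning trees. -/
open Set

theorem SimpleGraph.reachable_of_adj_succ {V : Type*} {G : SimpleGraph V} (f : ℕ → V) :
    ∀ m, (∀ t < m, G.Adj (f t) (f (t + 1))) → G.Reachable (f 0) (f m)
  | 0, _ => .rfl
  | m + 1, h => (reachable_of_adj_succ f m fun t ht => h t (by omega)).trans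
      (h m (by omega)).reachable

namespace Wheel

open SimpleGraph

variable {k : ℕ}

theorem natCast_ne_zero_of_lt {m : ℕ} (h0 : 0 < m) (hm : m < k) : (m : ZMod k) ≠ 0 := by
  rw [Ne, ZMod.natCast_eq_zero_iff]
  exact fun h => (Nat.le_of_dvd h0 h).not_gt hm

theorem add_one_ne_self (hk : 3 ≤ k) (i : ZMod k) : i + 1 ≠ i := by
  have h1 := natCast_ne_zero_of_lt (k := k) one_pos (by omega)
  rw [Nat.cast_one] at h1
  exact fun h => h1 (by linear_combination h)

def spoke (i : ZMod k) : Sym2 (Option (ZMod k)) := s(none, some i)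

def rim (i : ZMod k) : Sym2 (Option (ZMod k)) := s(some i, some (i + 1))

def edgesOf (A B : Set (ZMod k)) : Set (Sym2 (Option (ZMod k))) := spoke '' A ∪ rim '' B

def graphOf (A B : Set (ZMod k)) : SimpleGraph (Option (ZMod k)) :=
  fromEdgeSet (edgesOf A B)

theorem spoke_injective : Function.Injective (spoke (k := k)) := by
  intro i j h
  simpa [spoke] using h

theorem rim_injective (hk : 3 ≤ k) : Function.Injective (rim (k := k)) := by
  intro i j h
  simp only [rim, Sym2.eq_iff, Option.some_inj] at h
  rcases h with ⟨h, -⟩ | ⟨h1, h2⟩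
  · exact h
  · have : ((2 : ℕ) : ZMod k) = 0 := by push_cast; linear_combination h2 - h1
    exact absurd this (natCast_ne_zero_of_lt two_pos (by omega))

theorem spoke_ne_rim (i j : ZMod k) : spoke i ≠ rim j := by
  simp [spoke, rim]

theorem spoke_mem_edgesOf {A B : Set (ZMod k)} {i : ZMod k} :
    spoke i ∈ edgesOf A B ↔ i ∈ A := by
  simp [edgesOf, spoke_injective.eq_iff, (spoke_ne_rim _ _).symm]

theorem rim_mem_edgesOf (hk : 3 ≤ k) {A B : Set (ZMod k)} {i : ZMod k} :
    rim i ∈ edgesOf A B ↔ i ∈ B := by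
  simp [edgesOf, (rim_injective hk).eq_iff, spoke_ne_rim]

theorem edgesOf_inj (hk : 3 ≤ k) {A B A' B' : Set (ZMod k)} :
    edgesOf A B = edgesOf A' B' ↔ A = A' ∧ B = B' := by
  refine ⟨fun h => ⟨?_, ?_⟩, fun h => h.1 ▸ h.2 ▸ rfl⟩ <;> ext i
  · rw [← spoke_mem_edgesOf (B := B), h, spoke_mem_edgesOf]
  · rw [← rim_mem_edgesOf hk (A := A), h, rim_mem_edgesOf hk]

theorem edgesOf_injective_right (hk : 3 ≤ k) (f : Set (ZMod k) → Set (ZMod k)) :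
    Function.Injective fun B => edgesOf (f B) B :=
  fun _ _ h => ((edgesOf_inj hk).1 h).2

theorem eq_edgesOf_of_subset {T : Set (Sym2 (Option (ZMod k)))} (hT : T ⊆ wheelEdges k) :
    T = edgesOf {i | spoke i ∈ T} {i | rim i ∈ T} := by
  ext e
  refine ⟨fun he => ?_, ?_⟩
  · obtain ⟨i, rfl | rfl⟩ := hT he
    exacts [Or.inl ⟨i, he, rfl⟩, Or.inr ⟨i, he, rfl⟩]
  · rintro (⟨i, hi, rfl⟩ | ⟨i, hi, rfl⟩) <;> exact hi

theorem wheelEdges_diff_edgesOf (hk : 3 ≤ k) (A B : Set (ZMod k)) :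
    wheelEdges k \ edgesOf A B = edgesOf Aᶜ Bᶜ := by
  ext e
  constructor
  · rintro ⟨⟨i, rfl | rfl⟩, he⟩
    · exact Or.inl ⟨i, fun hi => he (spoke_mem_edgesOf.2 hi), rfl⟩
    · exact Or.inr ⟨i, fun hi => he ((rim_mem_edgesOf hk).2 hi), rfl⟩
  · rintro (⟨i, hi, rfl⟩ | ⟨i, hi, rfl⟩)
    · exact ⟨⟨i, Or.inl rfl⟩, fun h => hi (spoke_mem_edgesOf.1 h)⟩
    · exact ⟨⟨i, Or.inr rfl⟩, fun h => hi ((rim_mem_edgesOf hk).1 h)⟩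

def IsCoupledPair (A B : Set (ZMod k)) : Prop :=
  (graphOf A B).IsTree ∧ (graphOf Aᶜ Bᶜ).IsTree

theorem IsCoupledPair.compl {A B : Set (ZMod k)} (h : IsCoupledPair A B) :
    IsCoupledPair Aᶜ Bᶜ := by
  rw [IsCoupledPair, compl_compl, compl_compl]
  exact h.symm

theorem isCoupledTree_edgesOf_iff (hk : 3 ≤ k) {A B : Set (ZMod k)} :
    IsCoupledTree k (edgesOf A B) ↔ IsCoupledPair A B := by
  have hsub : edgesOf A B ⊆ wheelEdges k := by
    rintro _ (⟨i, -, rfl⟩ | ⟨i, -, rfl⟩)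
    exacts [⟨i, Or.inl rfl⟩, ⟨i, Or.inr rfl⟩]
  simp only [IsCoupledTree, wheelEdges_diff_edgesOf hk, hsub, true_and]
  rfl

theorem graphOf_adj {A B : Set (ZMod k)} {x y : Option (ZMod k)} :
    (graphOf A B).Adj x y ↔ s(x, y) ∈ edgesOf A B ∧ x ≠ y :=
  fromEdgeSet_adj _

theorem graphOf_adj_none_some {A B : Set (ZMod k)} {i : ZMod k} :
    (graphOf A B).Adj none (some i) ↔ i ∈ A := by
  rw [graphOf_adj, ← spoke, spoke_mem_edgesOf]
  simp

theorem graphOf_adj_some_iff (hk : 3 ≤ k) {A B : Set (ZMod k)} {i : ZMod k}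
    {y : Option (ZMod k)} :
    (graphOf A B).Adj (some i) y ↔
      (y = none ∧ i ∈ A) ∨ (y = some (i + 1) ∧ i ∈ B) ∨ (y = some (i - 1) ∧ i - 1 ∈ B) := by
  rcases y with _ | j
  · rw [adj_comm, graphOf_adj_none_some]
    simp
  simp only [graphOf_adj, edgesOf, mem_union, mem_image, spoke, rim, Sym2.eq_iff,
    Option.some_inj, reduceCtorEq, false_and, and_false, exists_false, false_or, ne_eq]
  constructor
  · rintro ⟨⟨l, hl, ⟨rfl, rfl⟩ | ⟨rfl, rfl⟩⟩, -⟩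
    · exact Or.inl ⟨rfl, hl⟩
    · exact Or.inr ⟨by ring, by rwa [add_sub_cancel_right]⟩
  · rintro (⟨rfl, hi⟩ | ⟨rfl, hi⟩)
    · exact ⟨⟨i, hi, Or.inl ⟨rfl, rfl⟩⟩, (add_one_ne_self hk i).symm⟩
    · exact ⟨⟨i - 1, hi, Or.inr ⟨rfl, by ring⟩⟩,
        fun h => add_one_ne_self hk (i - 1) (by rw [sub_add_cancel]; exact h)⟩

theorem natCard_edgeSet_graphOf (hk : 3 ≤ k) (A B : Set (ZMod k)) :
    Nat.card (graphOf A B).edgeSet = A.ncard + B.ncard := by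
  have : NeZero k := ⟨by omega⟩
  have hnd : Disjoint (edgesOf A B) Sym2.diagSet := by
    rw [Set.disjoint_left]
    rintro _ (⟨i, -, rfl⟩ | ⟨i, -, rfl⟩) hd <;>
      simp only [spoke, rim, Sym2.mem_diagSet, Sym2.mk_isDiag_iff, Option.some_inj,
        reduceCtorEq] at hd
    exact add_one_ne_self hk i hd.symm
  have hdisj : Disjoint (spoke '' A) (rim '' B) := by
    rw [Set.disjoint_left]
    rintro _ ⟨i, -, rfl⟩ ⟨j, -, hj⟩
    exact spoke_ne_rim i j hj.symm
  rw [graphOf, edgeSet_fromEdgeSet, hnd.sdiff_eq_left, Nat.card_coe_set_eq,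
    edgesOf, ncard_union_eq hdisj, ncard_image_of_injective _ spoke_injective,
    ncard_image_of_injective _ (rim_injective hk)]

theorem isTree_graphOf_iff (hk : 3 ≤ k) {A B : Set (ZMod k)} :
    (graphOf A B).IsTree ↔ (graphOf A B).Connected ∧ A.ncard + B.ncard = k := by
  have : NeZero k := ⟨by omega⟩
  rw [isTree_iff_connected_and_card, natCard_edgeSet_graphOf hk, Finite.card_option,
    Nat.card_zmod, Nat.add_right_cancel_iff]

theorem connected_graphOf_of_reachable_none {A B : Set (ZMod k)}
    (h : ∀ v, (graphOf A B).Reachable (some v) none) : (graphOf A B).Connected := by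
  refine (connected_iff_exists_forall_reachable _).2 ⟨none, ?_⟩
  rintro (_ | v)
  exacts [.rfl, (h v).symm]

theorem reachable_none_of_add_notMem (hk : 3 ≤ k) {B : Set (ZMod k)} (n : ℕ) (v : ZMod k)
    (hn : v + n ∉ B) : (graphOf Bᶜ B).Reachable (some v) none := by
  induction n generalizing v with
  | zero => exact (graphOf_adj_none_some.2 (by simpa using hn)).symm.reachable
  | succ n ih =>
    by_cases hv : v ∈ B
    · refine ((graphOf_adj_some_iff hk).2 (Or.inr (Or.inl ⟨rfl, hv⟩))).reachable.trans
        (ih (v + 1) ?_)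
      rwa [Nat.cast_succ, ← add_assoc, add_right_comm] at hn
    · exact (graphOf_adj_none_some.2 hv).symm.reachable

theorem reachable_none_of_sub_notMem (hk : 3 ≤ k) {B : Set (ZMod k)} (n : ℕ) (v : ZMod k)
    (hn : v - 1 - n ∉ B) : (graphOf {i | i - 1 ∉ B} B).Reachable (some v) none := by
  induction n generalizing v with
  | zero => exact (graphOf_adj_none_some.2 (by simpa using hn)).symm.reachable
  | succ n ih =>
    by_cases hv : v - 1 ∈ B
    · refine ((graphOf_adj_some_iff hk).2 (Or.inr (Or.inr ⟨rfl, hv⟩))).reachable.trans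
        (ih (v - 1) ?_)
      rwa [show v - 1 - ((n + 1 : ℕ) : ZMod k) = v - 1 - 1 - n by push_cast; ring] at hn
    · exact (graphOf_adj_none_some.2 hv).symm.reachable

theorem isTree_graphOf_compl (hk : 3 ≤ k) {B : Set (ZMod k)} (hB : B ≠ univ) :
    (graphOf Bᶜ B).IsTree := by
  have : NeZero k := ⟨by omega⟩
  obtain ⟨j, hj⟩ := (ne_univ_iff_exists_notMem B).1 hB
  refine (isTree_graphOf_iff hk).2 ⟨connected_graphOf_of_reachable_none fun v => ?_, ?_⟩
  · exact reachable_none_of_add_notMem hk (j - v).val v (by simpa using hj)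
  · rw [add_comm, ncard_add_ncard_compl, Nat.card_zmod]

theorem isTree_graphOf_shift (hk : 3 ≤ k) {B : Set (ZMod k)} (hB : B ≠ univ) :
    (graphOf {i | i - 1 ∉ B} B).IsTree := by
  have : NeZero k := ⟨by omega⟩
  obtain ⟨j, hj⟩ := (ne_univ_iff_exists_notMem B).1 hB
  refine (isTree_graphOf_iff hk).2 ⟨connected_graphOf_of_reachable_none fun v => ?_, ?_⟩
  · exact reachable_none_of_sub_notMem hk (v - 1 - j).val v (by simpa using hj)
  · have : {i | i - 1 ∉ B} = (· - 1) ⁻¹' Bᶜ := rfl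
    rw [this, ncard_preimage_of_injective_subset_range (sub_left_injective)
      fun x _ => ⟨x + 1, add_sub_cancel_right x 1⟩, add_comm, ncard_add_ncard_compl,
      Nat.card_zmod]

theorem isCoupledPair_compl (hk : 3 ≤ k) {B : Set (ZMod k)} (h₀ : B.Nonempty)
    (h₁ : B ≠ univ) : IsCoupledPair Bᶜ B :=
  ⟨isTree_graphOf_compl hk h₁, isTree_graphOf_compl hk (compl_ne_univ.2 h₀)⟩

theorem isCoupledPair_shift (hk : 3 ≤ k) {B : Set (ZMod k)} (h₀ : B.Nonempty)
    (h₁ : B ≠ univ) : IsCoupledPair {i | i - 1 ∉ B} B := by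
  refine ⟨isTree_graphOf_shift hk h₁, ?_⟩
  convert isTree_graphOf_shift hk (compl_ne_univ.2 h₀) using 2
  ext
  simp

theorem mem_or_mem_or_mem_of_connected (hk : 3 ≤ k) {A B : Set (ZMod k)}
    (hc : (graphOf A B).Connected) (i : ZMod k) : i ∈ A ∨ i ∈ B ∨ i - 1 ∈ B := by
  obtain ⟨y, hy⟩ := hc.preconnected.exists_adj_of_nontrivial (some i)
  rcases (graphOf_adj_some_iff hk).1 hy with ⟨-, h⟩ | ⟨-, h⟩ | ⟨-, h⟩ <;> simp [h]

theorem ne_univ_of_isTree (hk : 3 ≤ k) {A B : Set (ZMod k)} (hT : (graphOf A B).IsTree) :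
    B ≠ univ := by
  have : NeZero k := ⟨by omega⟩
  rintro rfl
  obtain ⟨hc, hcard⟩ := (isTree_graphOf_iff hk).1 hT
  obtain ⟨_ | i, hi⟩ := hc.preconnected.exists_adj_of_nontrivial none
  · exact (graphOf A univ).loopless.irrefl none hi
  have hA : A.Nonempty := ⟨i, graphOf_adj_none_some.1 hi⟩
  rw [ncard_univ, Nat.card_zmod] at hcard
  have := hA.ncard_pos
  omega

theorem exists_add_mem_of_connected (hk : 3 ≤ k) {A B : Set (ZMod k)}
    (hc : (graphOf A B).Connected) {i : ZMod k} {m : ℕ} (hs : i - 1 ∉ B)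
    (hrun : ∀ t < m, i + t ∈ B) (he : i + m ∉ B) : ∃ t ≤ m, i + t ∈ A := by
  by_contra! hA
  obtain ⟨p⟩ := hc.preconnected (some i) none
  obtain ⟨d, -, ⟨t, ht, hx⟩, hy⟩ :=
    p.exists_boundary_dart {x | ∃ t ≤ m, x = some (i + t)} ⟨0, Nat.zero_le _, by simp⟩
      (by rintro ⟨t, -, h⟩; cases h)
  have hadj := d.adj
  rw [hx, graphOf_adj_some_iff hk] at hadj
  rcases hadj with ⟨-, h⟩ | ⟨h, hb⟩ | ⟨h, hb⟩
  · exact hA t ht h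
  · have htm : t ≠ m := by rintro rfl; exact he hb
    exact hy ⟨t + 1, by omega, by rw [h]; push_cast; ring_nf⟩
  · rcases t with _ | t
    · exact hs (by simpa using hb)
    · exact hy ⟨t, by omega, by rw [h]; push_cast; ring_nf⟩

theorem not_mem_and_add_mem_of_isAcyclic (hk : 3 ≤ k) {A B : Set (ZMod k)}
    (hac : (graphOf A B).IsAcyclic) {i : ZMod k} {m : ℕ} (hm : 0 < m) (hmk : m < k)
    (hrun : ∀ t < m, i + t ∈ B) : ¬ (i ∈ A ∧ i + m ∈ A) := by
  rintro ⟨hi, him⟩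
  have hbr := isAcyclic_iff_forall_adj_isBridge.1 hac (graphOf_adj_none_some.2 hi)
  refine isBridge_iff.1 hbr (Reachable.symm ?_)
  have hrim : ((graphOf A B).deleteEdges {s(none, some i)}).Reachable (some i) (some (i + m)) := by
    simpa using reachable_of_adj_succ (fun t => some (i + t)) m fun t ht => by
      rw [deleteEdges_adj, graphOf_adj_some_iff hk]
      exact ⟨Or.inr (Or.inl ⟨by push_cast; ring_nf, hrun t ht⟩), by simp⟩
  refine hrim.trans (Adj.reachable ?_)
  rw [deleteEdges_adj, adj_comm, graphOf_adj_none_some]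
  refine ⟨him, fun h => natCast_ne_zero_of_lt hm hmk ?_⟩
  simp only [mem_singleton_iff, Sym2.eq_iff, Option.some_inj, reduceCtorEq, false_and,
    and_true, false_or] at h
  linear_combination h

/-- At `i` the rim passes from an edge of `B` to an edge of `Bᶜ` or back. -/
def IsTransition (B : Set (ZMod k)) (i : ZMod k) : Prop := (i - 1 ∈ B ↔ i ∉ B)

theorem IsCoupledPair.mem_iff_notMem_of_not_isTransition (hk : 3 ≤ k) {A B : Set (ZMod k)}
    (h : IsCoupledPair A B) {i : ZMod k} (hi : ¬ IsTransition B i) : i ∈ A ↔ i ∉ B := by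
  have h₁ := mem_or_mem_or_mem_of_connected hk h.1.connected i
  have h₂ := mem_or_mem_or_mem_of_connected hk h.2.connected i
  simp only [IsTransition, mem_compl_iff] at hi h₂
  tauto

theorem IsCoupledPair.mem_iff_add_notMem (hk : 3 ≤ k) {A B : Set (ZMod k)}
    (h : IsCoupledPair A B) {i : ZMod k} {m : ℕ} (hm : 0 < m) (hmk : m < k) (hs : i - 1 ∉ B)
    (hrun : ∀ t < m, i + t ∈ B) (he : i + m ∉ B) : i ∈ A ↔ i + m ∉ A := by
  have hinterior : ∀ t, 0 < t → t < m → i + t ∉ A := by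
    intro t ht htm
    rw [h.mem_iff_notMem_of_not_isTransition hk, not_not]
    · exact hrun t htm
    have hprev := hrun (t - 1) (by omega)
    rw [Nat.cast_sub (by omega), Nat.cast_one, ← add_sub_assoc] at hprev
    simp [IsTransition, hprev, hrun t htm]
  obtain ⟨t, htm, ht⟩ := exists_add_mem_of_connected hk h.1.connected hs hrun he
  have hno := not_mem_and_add_mem_of_isAcyclic hk h.1.isAcyclic hm hmk hrun
  rcases Nat.eq_zero_or_pos t with rfl | ht0
  · simp only [Nat.cast_zero, add_zero] at ht
    tauto
  · obtain rfl : t = m := by_contra fun hne => hinterior t ht0 (by omega) ht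
    tauto

theorem IsCoupledPair.iff_of_consecutive_isTransition (hk : 3 ≤ k) {A B : Set (ZMod k)}
    (h : IsCoupledPair A B) {i : ZMod k} {m : ℕ} (hm : 0 < m) (hi : IsTransition B i)
    (him : IsTransition B (i + m)) (hbetween : ∀ t, 0 < t → t < m → ¬ IsTransition B (i + t)) :
    (i ∈ A ↔ i ∈ B) ↔ (i + m ∈ A ↔ i + m ∈ B) := by
  have : NeZero k := ⟨by omega⟩
  have hrun : ∀ t < m, (i + t ∈ B ↔ i ∈ B) := by
    intro t htm
    induction t with
    | zero => simp
    | succ t ih =>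
      have hnot := hbetween (t + 1) t.succ_pos htm
      rw [IsTransition, Nat.cast_succ, ← add_assoc, add_sub_cancel_right] at hnot
      have := ih (by omega)
      rw [Nat.cast_succ, ← add_assoc]
      tauto
  have hmk : m < k := by
    by_contra! hkm
    have := hrun (k - 1) (by omega)
    rw [Nat.cast_pred (by omega), ZMod.natCast_self, zero_sub, ← sub_eq_add_neg] at this
    unfold IsTransition at hi
    tauto
  have hend : i + m ∈ B ↔ i ∉ B := by
    have := hrun (m - 1) (by omega)
    rw [Nat.cast_pred hm, ← add_sub_assoc] at this
    unfold IsTransition at him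
    tauto
  unfold IsTransition at hi
  by_cases hiB : i ∈ B
  · have := h.mem_iff_add_notMem hk hm hmk (by tauto) (fun t ht => (hrun t ht).2 hiB) (by tauto)
    tauto
  · have := h.compl.mem_iff_add_notMem hk hm hmk (by simpa [hiB] using hi)
      (fun t ht => by simpa [hrun t ht]) (by simpa [hend])
    simp only [mem_compl_iff] at this
    tauto

theorem iff_of_consecutive [NeZero k] {P Q : ZMod k → Prop}
    (h : ∀ i (m : ℕ), 0 < m → P i → P (i + m) → (∀ t, 0 < t → t < m → ¬ P (i + t)) →
      (Q i ↔ Q (i + m)))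
    {i j : ZMod k} (hi : P i) (hj : P j) : Q i ↔ Q j := by
  suffices key : ∀ (n : ℕ) (i : ZMod k), P i → P (i + n) → (Q i ↔ Q (i + n)) by
    simpa using key (j - i).val i hi (by simpa using hj)
  intro n
  induction n using Nat.strong_induction_on with
  | _ n ih =>
  intro i hi hn
  rcases Nat.eq_zero_or_pos n with rfl | hn0
  · simp
  classical
  have hex : ∃ m : ℕ, 0 < m ∧ P (i + m) := ⟨n, hn0, hn⟩
  set m := Nat.find hex
  obtain ⟨hm0, hm⟩ : 0 < m ∧ P (i + m) := Nat.find_spec hex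
  have hmn : m ≤ n := Nat.find_min' hex ⟨hn0, hn⟩
  have hsplit : i + (n : ZMod k) = i + m + ((n - m : ℕ) : ZMod k) := by
    rw [add_assoc, ← Nat.cast_add, Nat.add_sub_cancel' hmn]
  rw [hsplit] at hn ⊢
  rw [h i m hm0 hi hm fun t ht htm hP => Nat.find_min hex htm ⟨ht, hP⟩]
  exact ih _ (by omega) _ hm hn

theorem IsCoupledPair.eq_compl_or_eq_shift (hk : 3 ≤ k) {A B : Set (ZMod k)}
    (h : IsCoupledPair A B) : A = Bᶜ ∨ A = {i | i - 1 ∉ B} := by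
  have : NeZero k := ⟨by omega⟩
  have hconst : ∀ {i j}, IsTransition B i → IsTransition B j →
      ((i ∈ A ↔ i ∈ B) ↔ (j ∈ A ↔ j ∈ B)) :=
    iff_of_consecutive (Q := fun i => i ∈ A ↔ i ∈ B)
      fun i m hm hi him hbetween => h.iff_of_consecutive_isTransition hk hm hi him hbetween
  by_cases hex : ∃ j, IsTransition B j ∧ (j ∈ A ↔ j ∈ B)
  · obtain ⟨j, hj, hjA⟩ := hex
    right
    ext i
    by_cases hi : IsTransition B i
    · have := (hconst hi hj).2 hjA
      unfold IsTransition at hi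
      simp only [mem_ofPred_eq]
      tauto
    · have := h.mem_iff_notMem_of_not_isTransition hk hi
      unfold IsTransition at hi
      simp only [mem_ofPred_eq]
      tauto
  · push Not at hex
    left
    ext i
    by_cases hi : IsTransition B i
    · have := hex i hi
      simp only [mem_compl_iff]
      tauto
    · simpa using h.mem_iff_notMem_of_not_isTransition hk hi

theorem isCoupledPair_iff (hk : 3 ≤ k) {A B : Set (ZMod k)} :
    IsCoupledPair A B ↔ B.Nonempty ∧ B ≠ univ ∧ (A = Bᶜ ∨ A = {i | i - 1 ∉ B}) := by
  refine ⟨fun h => ⟨?_, ne_univ_of_isTree hk h.1, h.eq_compl_or_eq_shift hk⟩, ?_⟩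
  · rw [← compl_ne_univ]
    exact ne_univ_of_isTree hk h.2
  · rintro ⟨h₀, h₁, rfl | rfl⟩
    exacts [isCoupledPair_compl hk h₀ h₁, isCoupledPair_shift hk h₀ h₁]

theorem eq_empty_or_eq_univ_of_sub_one_mem_iff [NeZero k] {B : Set (ZMod k)}
    (h : ∀ i, i - 1 ∈ B ↔ i ∈ B) : B = ∅ ∨ B = univ := by
  have hB : ∀ n : ℕ, ((n : ZMod k) ∈ B ↔ (0 : ZMod k) ∈ B) := by
    intro n
    induction n with
    | zero => simp
    | succ n ih => rw [← ih, ← h, Nat.cast_succ, add_sub_cancel_right]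
  by_cases h0 : (0 : ZMod k) ∈ B
  · exact Or.inr (eq_univ_of_forall fun i => by simpa [h0] using hB i.val)
  · exact Or.inl (eq_empty_of_forall_notMem fun i => by simpa [h0] using hB i.val)

theorem ncard_setOf_nonempty_ne_univ [NeZero k] :
    {B : Set (ZMod k) | B.Nonempty ∧ B ≠ univ}.ncard = 2 ^ k - 2 := by
  have : {B : Set (ZMod k) | B.Nonempty ∧ B ≠ univ} = {∅, univ}ᶜ := by
    ext B
    simp [nonempty_iff_ne_empty]
  rw [this, ncard_compl, ncard_pair empty_ne_univ, Nat.card_eq_fintype_card,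
    Fintype.card_set, ZMod.card]

theorem setOf_isCoupledTree_eq (hk : 3 ≤ k) :
    {T | IsCoupledTree k T} =
      (fun B => edgesOf Bᶜ B) '' {B | B.Nonempty ∧ B ≠ univ} ∪
        (fun B => edgesOf {i | i - 1 ∉ B} B) '' {B | B.Nonempty ∧ B ≠ univ} := by
  ext T
  refine ⟨fun hT => ?_, ?_⟩
  · have hTe := eq_edgesOf_of_subset hT.1
    rw [hTe] at hT
    rw [hTe]
    obtain ⟨h₀, h₁, hA | hA⟩ := (isCoupledPair_iff hk).1 ((isCoupledTree_edgesOf_iff hk).1 hT)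
    · exact Or.inl ⟨_, ⟨h₀, h₁⟩, by rw [hA]⟩
    · exact Or.inr ⟨_, ⟨h₀, h₁⟩, by rw [hA]⟩
  · rintro (⟨B, ⟨h₀, h₁⟩, rfl⟩ | ⟨B, ⟨h₀, h₁⟩, rfl⟩) <;>
      exact (isCoupledTree_edgesOf_iff hk).2 ((isCoupledPair_iff hk).2 ⟨h₀, h₁, by simp⟩)

theorem disjoint_image_edgesOf_compl_shift (hk : 3 ≤ k) :
    Disjoint ((fun B => edgesOf Bᶜ B) '' {B : Set (ZMod k) | B.Nonempty ∧ B ≠ univ})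
      ((fun B => edgesOf {i | i - 1 ∉ B} B) '' {B | B.Nonempty ∧ B ≠ univ}) := by
  have : NeZero k := ⟨by omega⟩
  rw [Set.disjoint_left]
  rintro _ ⟨B, ⟨h₀, h₁⟩, rfl⟩ ⟨B', -, hB⟩
  obtain ⟨hA, rfl⟩ := (edgesOf_inj hk).1 hB
  rcases eq_empty_or_eq_univ_of_sub_one_mem_iff fun i => not_iff_not.1 (Set.ext_iff.1 hA i)
    with rfl | rfl
  exacts [h₀.ne_empty rfl, h₁ rfl]

end Wheel

open Wheel in
theorem stmt3 (k : ℕ) (hk : 3 ≤ k) :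
    {T : Set (Sym2 (Option (ZMod k))) | IsCoupledTree k T}.ncard =
      2 ^ (k + 1) - 4 := by
  have : NeZero k := ⟨by omega⟩
  rw [setOf_isCoupledTree_eq hk, ncard_union_eq (disjoint_image_edgesOf_compl_shift hk),
    ncard_image_of_injective _ (edgesOf_injective_right hk _),
    ncard_image_of_injective _ (edgesOf_injective_right hk _), ncard_setOf_nonempty_ne_univ]
  have : 2 ≤ 2 ^ k := Nat.le_self_pow (by omega) 2
  rw [pow_succ]
  omega
end

section
/- Let C be a cycle on a vertex set V ⊂ ℕ with |V| ≥ 4. If the minimum vertex min(V) and the maximum vertex max(V) are not adjacent in C, then C contains a forbidden path: a path v₁, v₂, …, v_k with k ≥ 4 such that v₁ = max(v₁,…,v_k), v_k = max(v₂,…,v_k), and v₂ > v_{k−1}. -/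
/-- `G` contains a forbidden path: a path `v 0, v 1, …, v (k-1)` with `k ≥ 4`
distinct vertices, consecutive vertices adjacent, such that `v 0` is the
largest vertex, `v (k-1)` is the largest among `v 1, …, v (k-1)`, and
`v 1 > v (k-2)`. -/
def HasForbiddenPath (G : SimpleGraph ℕ) : Prop :=
  ∃ (k : ℕ) (v : ℕ → ℕ), 4 ≤ k ∧ Set.InjOn v (Set.Iio k) ∧
    (∀ i, i + 1 < k → G.Adj (v i) (v (i + 1))) ∧
    (∀ i, i < k → v i ≤ v 0) ∧
    (∀ i, 1 ≤ i → i < k → v i ≤ v (k - 1)) ∧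
    v (k - 2) < v 1

lemma lemA (G : SimpleGraph ℕ) (m : ℕ) (hm : 4 ≤ m) (w : ℕ → ℕ)
    (hinj : Set.InjOn w (Set.Iio m))
    (hadj : ∀ i, i < m - 1 → G.Adj (w i) (w (i + 1)))
    (hlast : G.Adj (w 0) (w (m - 1)))
    (hmin : ∀ i, i < m → w 0 ≤ w i)
    (h1 : w 1 < w (m - 1))
    (p : ℕ) (hpm : p < m) (hpmax : ∀ i, i < m → w i ≤ w p)
    (hnadj : ¬ G.Adj (w 0) (w p)) : HasForbiddenPath G := by
  -- basic facts about p
  have hp0 : p ≠ 0 := by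
    rintro rfl
    have h01 : w 0 ≤ w 1 := hmin 1 (by omega)
    have h10 : w 1 ≤ w 0 := hpmax 1 (by omega)
    have : (1 : ℕ) = 0 := hinj (by simp; omega) (by simp; omega) (le_antisymm h10 h01)
    omega
  have hp1 : p ≠ 1 := by
    rintro rfl
    exact hnadj (hadj 0 (by omega))
  have hpm1 : p ≠ m - 1 := by
    rintro rfl
    exact hnadj hlast
  have hpLm : w (m - 1) < w p := by
    have hle : w (m - 1) ≤ w p := hpmax (m - 1) (by omega)
    refine lt_of_le_of_ne hle fun h => ?_
    have := hinj (by simp; omega) (by simp; omega) h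
    omega
  have hex : ∃ q, w (m - 1) < w q := ⟨p, hpLm⟩
  set q := Nat.find hex with hqdef
  have hq : w (m - 1) < w q := Nat.find_spec hex
  have hqp : q ≤ p := Nat.find_min' hex hpLm
  have hq2 : 2 ≤ q := by
    have h0 : q ≠ 0 := by
      intro h
      rw [h] at hq
      exact absurd hq (not_lt.2 (hmin (m - 1) (by omega)))
    have h1' : q ≠ 1 := by
      intro h
      rw [h] at hq
      exact absurd hq (not_lt.2 h1.le)
    omega
  have hqm : q ≤ m - 2 := by omega
  have hlt : ∀ i, i < q → w i < w (m - 1) := by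
    intro i hi
    have hile : w i ≤ w (m - 1) := not_lt.1 (Nat.find_min hex hi)
    refine lt_of_le_of_ne hile fun h => ?_
    have := hinj (by simp; omega) (by simp; omega) h
    omega
  refine ⟨q + 2, fun j => if j ≤ q then w (q - j) else w (m - 1), by omega, ?_, ?_, ?_, ?_, ?_⟩
  · -- injectivity
    intro a ha b hb hab
    simp only [Set.mem_Iio] at ha hb
    by_cases h1a : a ≤ q <;> by_cases h1b : b ≤ q <;>
      simp only [h1a, h1b, if_pos, if_neg, if_true, if_false] at hab
    · have := hinj (by simp; omega) (by simp; omega) hab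
      omega
    · have := hinj (by simp; omega) (by simp; omega) hab
      omega
    · have := hinj (by simp; omega) (by simp; omega) hab
      omega
    · omega
  · -- adjacency
    intro i hi
    by_cases h : i + 1 ≤ q
    · simp only [if_pos (by omega : i ≤ q), if_pos h]
      have h2 : q - i = q - (i + 1) + 1 := by omega
      rw [h2]
      exact (hadj (q - (i + 1)) (by omega)).symm
    · have hiq : i = q := by omega
      subst hiq
      simp only [if_pos le_rfl, if_neg (by omega : ¬ q + 1 ≤ q), Nat.sub_self]
      exact hlast
  · -- max at index 0
    intro i hi
    simp only [if_pos (by omega : (0:ℕ) ≤ q), Nat.sub_zero]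
    by_cases h : i ≤ q
    · simp only [if_pos h]
      rcases Nat.eq_zero_or_pos i with rfl | hi0
      · simp
      · exact ((hlt (q - i) (by omega)).trans hq).le
    · simp only [if_neg h]
      exact hq.le
  · -- second max at the end
    intro i hi1 hi
    have hk : q + 2 - 1 = q + 1 := by omega
    rw [hk]
    simp only [if_neg (by omega : ¬ q + 1 ≤ q)]
    by_cases h : i ≤ q
    · simp only [if_pos h]
      exact (hlt (q - i) (by omega)).le
    · simp only [if_neg h]
      exact le_rfl
  · -- v (k-2) < v 1
    have hk : q + 2 - 2 = q := by omega
    rw [hk]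
    simp only [if_pos le_rfl, if_pos (by omega : 1 ≤ q), Nat.sub_self]
    have hle : w 0 ≤ w (q - 1) := hmin (q - 1) (by omega)
    refine lt_of_le_of_ne hle fun h => ?_
    have := hinj (by simp; omega) (by simp; omega) h
    omega

theorem stmt6 (m : ℕ) (hm : 4 ≤ m) (v : ℕ → ℕ) (hv : Set.InjOn v (Set.Iio m))
    (G : SimpleGraph ℕ)
    (hG : G = SimpleGraph.fromEdgeSet {e | ∃ i < m, e = s(v i, v ((i + 1) % m))})
    (hnadj : ¬ G.Adj (sInf (v '' Set.Iio m)) (sSup (v '' Set.Iio m))) :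
    HasForbiddenPath G := by
  have hm0 : 0 < m := by omega
  have mod_lt : ∀ x : ℕ, x % m < m := fun x => Nat.mod_lt x hm0
  have hSfin : (v '' Set.Iio m).Finite := (Set.finite_Iio m).image v
  have hSne : (v '' Set.Iio m).Nonempty := ⟨v 0, 0, by simp; omega⟩
  obtain ⟨t, ht, hvt⟩ := Nat.sInf_mem hSne
  obtain ⟨s, hs, hvs⟩ := hSne.csSup_mem hSfin
  simp only [Set.mem_Iio] at ht hs
  have hmem : ∀ i : ℕ, i < m → v i ∈ v '' Set.Iio m := fun i hi => ⟨i, by simp [hi]⟩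
  have hμle : ∀ i, i < m → v t ≤ v i := by
    intro i hi; rw [hvt]; exact Nat.sInf_le (hmem i hi)
  have hleM : ∀ i, i < m → v i ≤ v s := by
    intro i hi; rw [hvs]; exact le_csSup hSfin.bddAbove (hmem i hi)
  rw [← hvt, ← hvs] at hnadj
  have hts : t ≠ s := by
    intro h
    have e0 : v 0 = v t := le_antisymm (h ▸ hleM 0 (by omega)) (hμle 0 (by omega))
    have e1 : v 1 = v t := le_antisymm (h ▸ hleM 1 (by omega)) (hμle 1 (by omega))
    have : (0 : ℕ) = 1 := hv (by simp; omega) (by simp; omega) (e0.trans e1.symm)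
    omega
  -- edges of G
  have hedge : ∀ a, a < m → G.Adj (v a) (v ((a + 1) % m)) := by
    intro a ha
    rw [hG, SimpleGraph.fromEdgeSet_adj]
    refine ⟨⟨a, ha, rfl⟩, ?_⟩
    intro h
    have h2 := hv (by simp [ha]) (by simp [mod_lt]) h
    rcases Nat.lt_or_ge (a + 1) m with h3 | h3
    · rw [Nat.mod_eq_of_lt h3] at h2; omega
    · have h4 : a + 1 = m := by omega
      rw [h4, Nat.mod_self] at h2; omega
  -- arithmetic helpers
  have e2 : ∀ x : ℕ, (m - 1) * ((m - 1) * x) = x + (x * (m - 2)) * m := by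
    obtain ⟨n, rfl⟩ : ∃ n, m = n + 2 := ⟨m - 2, by omega⟩
    intro x
    show (n + 1) * ((n + 1) * x) = x + (x * n) * (n + 2)
    ring
  have emul : ∀ i : ℕ, (m - 1) * (i + 1) + 1 = (m - 1) * i + m := by
    obtain ⟨n, rfl⟩ : ∃ n, m = n + 2 := ⟨m - 2, by omega⟩
    intro i
    show (n + 1) * (i + 1) + 1 = (n + 1) * i + (n + 2)
    ring
  have esq : (m - 1) * (m - 1) = 1 + (1 * (m - 2)) * m := by
    have := e2 1
    rwa [mul_one] at this
  have inj1 : ∀ i j, i < m → j < m → (t + i) % m = (t + j) % m → i = j := by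
    intro i j hi hj h
    have h2 : i ≡ j [MOD m] := Nat.ModEq.add_left_cancel' t h
    have h3 : i % m = j % m := h2
    rwa [Nat.mod_eq_of_lt hi, Nat.mod_eq_of_lt hj] at h3
  have inj2 : ∀ i j, i < m → j < m →
      (t + (m - 1) * i) % m = (t + (m - 1) * j) % m → i = j := by
    intro i j hi hj h
    have h1 : (m - 1) * i ≡ (m - 1) * j [MOD m] := Nat.ModEq.add_left_cancel' t h
    have h2 := h1.mul_left (m - 1)
    rw [e2 i, e2 j] at h2
    have h3 : (i + i * (m - 2) * m) % m = (j + j * (m - 2) * m) % m := h2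
    rw [Nat.add_mul_mod_self_right, Nat.add_mul_mod_self_right] at h3
    rwa [Nat.mod_eq_of_lt hi, Nat.mod_eq_of_lt hj] at h3
  -- the two neighbours of the minimum
  have hRL : v ((t + 1) % m) ≠ v ((t + (m - 1)) % m) := by
    intro h
    have h2 := hv (Set.mem_Iio.2 (mod_lt _)) (Set.mem_Iio.2 (mod_lt _)) h
    have h3 : 1 % m = (m - 1) % m := Nat.ModEq.add_left_cancel' t h2
    rw [Nat.mod_eq_of_lt (by omega), Nat.mod_eq_of_lt (by omega)] at h3
    omega
  rcases lt_or_gt_of_ne hRL with hcase | hcase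
  · -- forward direction: w i = v ((t + i) % m)
    apply lemA G m hm (fun i => v ((t + i) % m))
    · intro i hi j hj h
      simp only [Set.mem_Iio] at hi hj
      exact inj1 i j hi hj (hv (Set.mem_Iio.2 (mod_lt _)) (Set.mem_Iio.2 (mod_lt _)) h)
    · intro i hi
      have h5 := hedge ((t + i) % m) (mod_lt _)
      rw [Nat.mod_add_mod] at h5
      exact h5
    · show G.Adj (v ((t + 0) % m)) (v ((t + (m - 1)) % m))
      have key : ((t + (m - 1)) % m + 1) % m = (t + 0) % m := by
        rw [Nat.mod_add_mod, show t + (m - 1) + 1 = t + 0 + m by omega, Nat.add_mod_right]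
      have h5 := hedge ((t + (m - 1)) % m) (mod_lt _)
      rw [key] at h5
      exact h5.symm
    · intro i hi
      show v ((t + 0) % m) ≤ v ((t + i) % m)
      rw [show t + 0 = t from rfl, Nat.mod_eq_of_lt ht]
      exact hμle _ (mod_lt _)
    · exact hcase
    · exact mod_lt (s + m - t)
    · intro i hi
      show v ((t + i) % m) ≤ v ((t + (s + m - t) % m) % m)
      rw [Nat.add_mod_mod, show t + (s + m - t) = s + m by omega, Nat.add_mod_right,
        Nat.mod_eq_of_lt hs]
      exact hleM _ (mod_lt _)
    · show ¬ G.Adj (v ((t + 0) % m)) (v ((t + (s + m - t) % m) % m))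
      rw [Nat.add_mod_mod, show t + (s + m - t) = s + m by omega, Nat.add_mod_right,
        Nat.mod_eq_of_lt hs, show t + 0 = t from rfl, Nat.mod_eq_of_lt ht]
      exact hnadj
  · -- backward direction: w i = v ((t + (m-1) * i) % m)
    have keyl : (t + (m - 1) * (m - 1)) % m = (t + 1) % m := by
      rw [esq, show t + (1 + 1 * (m - 2) * m) = t + 1 + 1 * (m - 2) * m by omega,
        Nat.add_mul_mod_self_right]
    have hred : ∀ X : ℕ, (t + (m - 1) * (X % m)) % m = (t + (m - 1) * X) % m := by
      intro X
      conv_lhs => rw [Nat.add_mod, Nat.mul_mod, Nat.mod_mod_of_dvd X dvd_rfl, ← Nat.mul_mod]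
      rw [← Nat.add_mod]
    apply lemA G m hm (fun i => v ((t + (m - 1) * i) % m))
    · intro i hi j hj h
      simp only [Set.mem_Iio] at hi hj
      exact inj2 i j hi hj (hv (Set.mem_Iio.2 (mod_lt _)) (Set.mem_Iio.2 (mod_lt _)) h)
    · intro i hi
      show G.Adj (v ((t + (m - 1) * i) % m)) (v ((t + (m - 1) * (i + 1)) % m))
      have key : ((t + (m - 1) * (i + 1)) % m + 1) % m = (t + (m - 1) * i) % m := by
        rw [Nat.mod_add_mod, show t + (m - 1) * (i + 1) + 1 = t + ((m - 1) * (i + 1) + 1) by omega,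
          emul i, ← Nat.add_assoc, Nat.add_mod_right]
      have h5 := hedge ((t + (m - 1) * (i + 1)) % m) (mod_lt _)
      rw [key] at h5
      exact h5.symm
    · show G.Adj (v ((t + (m - 1) * 0) % m)) (v ((t + (m - 1) * (m - 1)) % m))
      rw [keyl, show (m - 1) * 0 = 0 from rfl, show t + 0 = t from rfl, Nat.mod_eq_of_lt ht]
      exact hedge t ht
    · intro i hi
      show v ((t + (m - 1) * 0) % m) ≤ v ((t + (m - 1) * i) % m)
      rw [show (m - 1) * 0 = 0 from rfl, show t + 0 = t from rfl, Nat.mod_eq_of_lt ht]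
      exact hμle _ (mod_lt _)
    · show v ((t + (m - 1) * 1) % m) < v ((t + (m - 1) * (m - 1)) % m)
      rw [keyl, mul_one]
      exact hcase
    · exact mod_lt ((m - 1) * (s + m - t))
    · intro i hi
      show v ((t + (m - 1) * i) % m) ≤ v ((t + (m - 1) * ((m - 1) * (s + m - t) % m)) % m)
      rw [hred, e2, show t + (s + m - t + (s + m - t) * (m - 2) * m)
            = t + (s + m - t) + (s + m - t) * (m - 2) * m by omega,
        Nat.add_mul_mod_self_right, show t + (s + m - t) = s + m by omega,
        Nat.add_mod_right, Nat.mod_eq_of_lt hs]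
      exact hleM _ (mod_lt _)
    · show ¬ G.Adj (v ((t + (m - 1) * 0) % m)) (v ((t + (m - 1) * ((m - 1) * (s + m - t) % m)) % m))
      rw [hred, e2, show t + (s + m - t + (s + m - t) * (m - 2) * m)
            = t + (s + m - t) + (s + m - t) * (m - 2) * m by omega,
        Nat.add_mul_mod_self_right, show t + (s + m - t) = s + m by omega,
        Nat.add_mod_right, Nat.mod_eq_of_lt hs, show (m - 1) * 0 = 0 from rfl,
        show t + 0 = t from rfl, Nat.mod_eq_of_lt ht]
      exact hnadj
end

section
/- Let F be a 2-connected graph on a finite vertex set V ⊂ ℕ containing no forbidden path. Then the edge {min(V), max(V)} belongs to F. -/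
/-- `G` restricted to the vertex set `S` is connected: `S` is nonempty and any
two vertices of `S` are joined by a walk staying inside `S`. -/
def ConnOn (G : SimpleGraph ℕ) (S : Set ℕ) : Prop :=
  S.Nonempty ∧ ∀ a ∈ S, ∀ b ∈ S, ∃ w : G.Walk a b, ∀ x ∈ w.support, x ∈ S

/-- `G` is 2-connected on the vertex set `S`: connected on `S`, and still
connected after deleting any single vertex of `S`. -/
def TwoConnOn (G : SimpleGraph ℕ) (S : Set ℕ) : Prop :=
  ConnOn G S ∧ ∀ x ∈ S, ConnOn G (S \ {x})

namespace SimpleGraph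

variable {V : Type*} {G : SimpleGraph V}

theorem Walk.exists_path_within_adj_outside {u v : V} (P : V → Prop) (w : G.Walk u v)
    (hu : P u) (hv : ¬ P v) :
    ∃ c d, (∃ p : G.Walk u c, p.IsPath ∧ ∀ z ∈ p.support, P z) ∧ G.Adj c d ∧ ¬ P d ∧
      d ∈ w.support := by
  classical
  set S : Set V := {x | ∃ p : G.Walk u x, ∀ z ∈ p.support, P z}
  have huS : u ∈ S := ⟨.nil, by simpa using hu⟩
  have hvS : v ∉ S := fun ⟨p, hp⟩ => hv (hp v p.end_mem_support)
  obtain ⟨dt, hdt, ⟨p, hp⟩, hsnd⟩ := w.exists_boundary_dart S huS hvS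
  refine ⟨dt.fst, dt.snd,
    ⟨p.bypass, p.bypass_isPath, fun z hz => hp z (p.support_bypass_subset_support hz)⟩,
    dt.adj, fun hPd => hsnd ⟨p.concat dt.adj, ?_⟩, w.dart_snd_mem_support_of_mem_darts hdt⟩
  intro z hz
  rw [Walk.support_concat, List.mem_append, List.mem_singleton] at hz
  rcases hz with hz | rfl
  · exact hp z hz
  · exact hPd

end SimpleGraph

open SimpleGraph

theorem hasForbiddenPath_of_isPath {G : SimpleGraph ℕ} {x y : ℕ} (W : G.Walk x y)
    (hW : W.IsPath) (hlen : 3 ≤ W.length) (hx : ∀ z ∈ W.support, z ≤ x)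
    (hy : ∀ z ∈ W.support.tail, z ≤ y) (hsnd : W.penultimate < W.snd) :
    HasForbiddenPath G := by
  have hnil : ¬ W.Nil := by rw [← Walk.length_eq_zero_iff]; omega
  refine ⟨W.length + 1, W.getVert, by omega, ?_, ?_, ?_, ?_, ?_⟩
  · refine hW.getVert_injOn.mono fun i hi => ?_
    simp only [Set.mem_Iio, Set.mem_ofPred_eq] at hi ⊢
    omega
  · exact fun i hi => W.adj_getVert_succ (by omega)
  · intro i _
    rw [Walk.getVert_zero]
    exact hx _ (W.getVert_mem_support i)
  · intro i hi _
    rw [Nat.add_sub_cancel, Walk.getVert_length]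
    exact hy _ (Walk.getVert_mem_tail_support hnil (by omega))
  · simpa [Walk.penultimate, Walk.snd] using hsnd

theorem hasForbiddenPath_of_adj_of_isPath {G : SimpleGraph ℕ} {a c d m : ℕ} (q : G.Walk c m)
    (hq : q.IsPath) (hqa : ∀ z ∈ q.support, z < a) (hdc : G.Adj d c) (hma : G.Adj m a)
    (had : a < d) (hmc : m < c) : HasForbiddenPath G := by
  have hqnil : ¬ q.Nil := fun h => hmc.ne' h.eq
  have hsupp : ∀ z ∈ (q.concat hma).support, z ≤ a := by
    intro z hz
    rw [Walk.support_concat, List.mem_append, List.mem_singleton] at hz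
    rcases hz with hz | rfl
    · exact (hqa z hz).le
    · exact le_rfl
  refine hasForbiddenPath_of_isPath (.cons hdc (q.concat hma)) ?_ ?_ ?_ ?_ ?_
  · refine (hq.concat (fun ha => (hqa a ha).false) hma).cons fun hd => ?_
    exact (hsupp d hd).not_gt had
  · have : 0 < q.length := Nat.pos_of_ne_zero fun h => hqnil (Walk.length_eq_zero_iff.mp h)
    simp only [Walk.length_cons, Walk.length_concat]
    omega
  · intro z hz
    rw [Walk.support_cons, List.mem_cons] at hz
    rcases hz with rfl | hz
    · exact le_rfl
    · exact (hsupp z hz).trans had.le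
  · simpa using hsupp
  · rw [Walk.penultimate_cons_of_not_nil _ _
      (by rw [← Walk.length_eq_zero_iff, Walk.length_concat]; omega),
    Walk.penultimate_concat, Walk.snd_cons]
    exact hmc

theorem hasForbiddenPath_of_walk_avoiding_max_neighbor {G : SimpleGraph ℕ} {m a M : ℕ}
    (hmin : ∀ x y, G.Adj x y → m ≤ x) (hma : G.Adj m a) (hmax : ∀ x, G.Adj m x → x ≤ a)
    (haM : a < M) (w : G.Walk m M) (hwa : a ∉ w.support) : HasForbiddenPath G := by
  have hmlt : m < a := (hmin a m hma.symm).lt_of_ne hma.ne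
  obtain ⟨c, d, ⟨p, hp, hpa⟩, hcd, hda, hdw⟩ :=
    w.exists_path_within_adj_outside (· < a) hmlt haM.not_gt
  have had : a < d := (not_lt.mp hda).lt_of_ne fun h => hwa (h ▸ hdw)
  have hmc : m < c := (hmin c d hcd).lt_of_ne fun h => (hmax d (h ▸ hcd)).not_gt had
  exact hasForbiddenPath_of_adj_of_isPath p.reverse hp.reverse (by simpa using hpa) hcd.symm hma
    had hmc

theorem stmt7 (G : SimpleGraph ℕ) (V : Finset ℕ) (hV : V.Nonempty)
    (hedges : ∀ e ∈ G.edgeSet, ∀ x ∈ e, x ∈ V)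
    (h2conn : TwoConnOn G ↑V) (hforb : ¬ HasForbiddenPath G) :
    G.Adj (V.min' hV) (V.max' hV) := by
  obtain ⟨⟨-, hconn⟩, hdel⟩ := h2conn
  have hmem : ∀ {x y}, G.Adj x y → x ∈ V := fun h => hedges _ h _ (Sym2.mem_mk_left _ _)
  set m := V.min' hV
  set M := V.max' hV
  have hmV : m ∈ V := V.min'_mem hV
  have hMV : M ∈ V := V.max'_mem hV
  obtain ⟨⟨y, hyV, hym⟩, -⟩ := hdel m hmV
  have hmM : m < M := V.min'_lt_max' hmV hyV (Ne.symm hym)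
  obtain ⟨w, -⟩ := hconn m hmV M hMV
  obtain ⟨a, hma, hmax⟩ := Set.exists_max_image (G.neighborSet m) id
    (V.finite_toSet.subset fun x hx => hmem hx.symm) ⟨_, w.adj_snd (w.not_nil_of_ne hmM.ne)⟩
  by_contra hne
  have haM : a < M := (V.le_max' a (hmem hma.symm)).lt_of_ne fun h => hne (by rwa [h] at hma)
  obtain ⟨-, hconn'⟩ := hdel a (hmem hma.symm)
  obtain ⟨w', hw'⟩ := hconn' m ⟨hmV, hma.ne⟩ M ⟨hMV, haM.ne'⟩
  exact hforb <| hasForbiddenPath_of_walk_avoiding_max_neighbor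
    (fun x _ h => V.min'_le x (hmem h)) hma hmax haM w' fun h => (hw' a h).2 rfl
end

section
/- For n ≥ 1, the number of decreasing planar trees on vertex set [1,n] equals (2n−3)(2n−5)⋯3·1 = (2n−2)!/((n−1)!·2^{n−1}). -/
/-- A decreasing planar tree on `[1,n]`: a rooted tree on the vertices
`1, …, n` in which every node is smaller than all of its ancestors (so the
root is `n`), together with a linear ordering of the children of each node.
It is encoded by the parent function `parent` (with `i < parent i`, which
forces the decreasing property) and by the rank `ord i` of each non-root node
`i` within the birth order of its sibling set.  Both functions are normalized
to `0` outside `[1, n-1]`, so that trees correspond bijectively to terms. -/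
structure DPT (n : ℕ) : Type where
  parent : ℕ → ℕ
  ord : ℕ → ℕ
  parent_mem : ∀ i, 1 ≤ i → i < n → i < parent i ∧ parent i ≤ n
  ord_lt : ∀ i, 1 ≤ i → i < n →
    ord i < Nat.card {j : ℕ // 1 ≤ j ∧ j < n ∧ parent j = parent i}
  ord_inj : ∀ i j, 1 ≤ i → i < n → 1 ≤ j → j < n →
    parent i = parent j → ord i = ord j → i = j
  parent_out : ∀ i, i = 0 ∨ n ≤ i → parent i = 0
  ord_out : ∀ i, i = 0 ∨ n ≤ i → ord i = 0

/-!
Vertex `1` is always a leaf. Deleting it and relabelling `j + 1 ↦ j` leaves a decreasing planar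
tree on `[1, n]`, and conversely a new leaf `1` can be grafted onto a tree on `[1, n]` in exactly
`2n - 1` ways: below any vertex `p`, in any of the `#(children p) + 1` gaps between its children,
and `∑ₚ (#(children p) + 1) = (n - 1) + n`. Hence the count `c n` satisfies `c 1 = 1` and
`c (n + 1) = (2n - 1) c n`.
-/

open Finset
open scoped Nat

namespace DPT

variable {n : ℕ}

theorem ext_of_agree {s t : DPT n}
    (h : ∀ i, 1 ≤ i → i < n → s.parent i = t.parent i ∧ s.ord i = t.ord i) : s = t := by
  have hpar : s.parent = t.parent := funext fun i => by
    by_cases hi : 1 ≤ i ∧ i < n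
    · exact (h i hi.1 hi.2).1
    · rw [s.parent_out i (by omega), t.parent_out i (by omega)]
  have hord : s.ord = t.ord := funext fun i => by
    by_cases hi : 1 ≤ i ∧ i < n
    · exact (h i hi.1 hi.2).2
    · rw [s.ord_out i (by omega), t.ord_out i (by omega)]
  cases s
  cases t
  subst hpar hord
  rfl

theorem ext_succ {S T : DPT (n + 1)} (h₁ : S.parent 1 = T.parent 1 ∧ S.ord 1 = T.ord 1)
    (h : ∀ j, 1 ≤ j → j < n → S.parent (j + 1) = T.parent (j + 1) ∧ S.ord (j + 1) = T.ord (j + 1)) :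
    S = T :=
  ext_of_agree fun i hi₁ hi₂ => by
    obtain ⟨j, rfl⟩ : ∃ j, i = j + 1 := ⟨i - 1, by omega⟩
    rcases Nat.eq_zero_or_pos j with rfl | hj
    · exact h₁
    · exact h j hj (by omega)

theorem ord_ne_of_parent_eq (t : DPT n) {i j : ℕ} (hi₁ : 1 ≤ i) (hi₂ : i < n) (hj₁ : 1 ≤ j)
    (hj₂ : j < n) (hij : i ≠ j) (hp : t.parent i = t.parent j) : t.ord i ≠ t.ord j :=
  fun ho => hij (t.ord_inj i j hi₁ hi₂ hj₁ hj₂ hp ho)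

def children (n : ℕ) (f : ℕ → ℕ) (p : ℕ) : Finset ℕ := {j ∈ Ico 1 n | f j = p}

theorem mem_children {f : ℕ → ℕ} {p j : ℕ} : j ∈ children n f p ↔ 1 ≤ j ∧ j < n ∧ f j = p := by
  simp [children, and_assoc]

theorem natCard_eq_card_children (f : ℕ → ℕ) (p : ℕ) :
    Nat.card {j : ℕ // 1 ≤ j ∧ j < n ∧ f j = p} = #(children n f p) := by
  rw [← Nat.card_eq_finsetCard]
  exact Nat.card_congr (Equiv.subtypeEquivRight fun _ => mem_children.symm)

theorem ord_lt_card_children (t : DPT n) {i : ℕ} (hi₁ : 1 ≤ i) (hi₂ : i < n) :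
    t.ord i < #(children n t.parent (t.parent i)) :=
  natCard_eq_card_children (n := n) t.parent _ ▸ t.ord_lt i hi₁ hi₂

theorem sum_card_children (t : DPT n) : ∑ p ∈ Icc 1 n, #(children n t.parent p) = n - 1 := by
  rw [← Nat.card_Ico 1 n, card_eq_sum_card_fiberwise (f := t.parent)]
  · rfl
  · intro j hj
    have := t.parent_mem j (mem_Ico.1 hj).1 (mem_Ico.1 hj).2
    simp only [coe_Icc, Set.mem_Icc]
    omega

/-- Relabelling `j + 1 ↦ j` turns the children of `q + 1` other than `1` into those of `q`. -/
theorem card_children_succ (hn : 1 ≤ n) {F f : ℕ → ℕ}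
    (hF : ∀ j, 1 ≤ j → j < n → F (j + 1) = f j + 1) (q : ℕ) :
    #(children (n + 1) F (q + 1)) = #(children n f q) + if F 1 = q + 1 then 1 else 0 := by
  have hshift : #((children (n + 1) F (q + 1)).erase 1) = #(children n f q) := by
    refine card_nbij' (· - 1) (· + 1) ?_ ?_ ?_ ?_
    · intro a ha
      rw [mem_coe, mem_erase, mem_children] at ha
      obtain ⟨j, rfl⟩ : ∃ j, a = j + 1 := ⟨a - 1, by omega⟩
      have := hF j (by omega) (by omega)
      simp only [mem_coe, mem_children, Nat.add_sub_cancel]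
      omega
    · intro b hb
      rw [mem_coe, mem_children] at hb
      have := hF b hb.1 hb.2.1
      rw [mem_coe, mem_erase, mem_children]
      dsimp only
      omega
    · intro a ha
      rw [mem_coe, mem_erase, mem_children] at ha
      dsimp only
      omega
    · intro b _
      simp
  have hleaf : 1 ∈ children (n + 1) F (q + 1) ↔ F 1 = q + 1 := by
    rw [mem_children]
    omega
  rw [← hshift]
  by_cases h : F 1 = q + 1
  · rw [if_pos h, card_erase_add_one (hleaf.2 h)]
  · rw [if_neg h, erase_eq_of_notMem (mt hleaf.1 h), add_zero]

/-- `⟨p, k⟩` stands for attaching a new leaf to `p` as its child of rank `k`. -/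
def slots (t : DPT n) : Finset (Σ _ : ℕ, ℕ) :=
  (Icc 1 n).sigma fun p => range (#(children n t.parent p) + 1)

theorem mk_mem_slots {t : DPT n} {p k : ℕ} :
    (⟨p, k⟩ : Σ _ : ℕ, ℕ) ∈ slots t ↔ 1 ≤ p ∧ p ≤ n ∧ k ≤ #(children n t.parent p) := by
  simp [slots, and_assoc]

theorem card_slots (hn : 1 ≤ n) (t : DPT n) : #(slots t) = 2 * n - 1 := by
  simp only [slots, card_sigma, card_range, sum_add_distrib, sum_card_children, sum_const,
    Nat.card_Icc, smul_eq_mul, mul_one]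
  omega

section EraseLeaf

variable (T : DPT (n + 1))

def eraseLeafParent (j : ℕ) : ℕ := if 1 ≤ j ∧ j < n then T.parent (j + 1) - 1 else 0

theorem parent_succ_eq_eraseLeafParent {j : ℕ} (hj₁ : 1 ≤ j) (hj₂ : j < n) :
    T.parent (j + 1) = eraseLeafParent T j + 1 := by
  have := T.parent_mem (j + 1) (by omega) (by omega)
  rw [eraseLeafParent, if_pos ⟨hj₁, hj₂⟩]
  omega

theorem card_children_eraseLeafParent (hn : 1 ≤ n) (q : ℕ) :
    #(children (n + 1) T.parent (q + 1)) =
      #(children n (eraseLeafParent T) q) + if T.parent 1 = q + 1 then 1 else 0 :=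
  card_children_succ hn (fun _ => parent_succ_eq_eraseLeafParent T) q

theorem ord_one_lt_and_ne_of_parent_eq {j : ℕ} (hj₁ : 1 ≤ j) (hj₂ : j < n)
    (h : T.parent (j + 1) = T.parent 1) :
    T.ord 1 < #(children (n + 1) T.parent (T.parent (j + 1))) ∧ T.ord (j + 1) ≠ T.ord 1 :=
  ⟨h ▸ T.ord_lt_card_children le_rfl (by omega),
    T.ord_ne_of_parent_eq (by omega) (by omega) le_rfl (by omega) (by omega) h⟩

/-- Delete the leaf `1` and relabel `j + 1 ↦ j`; the younger siblings of `1` move up one rank. -/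
def eraseLeaf : DPT n where
  parent := eraseLeafParent T
  ord j :=
    if 1 ≤ j ∧ j < n then
      if T.parent (j + 1) = T.parent 1 ∧ T.ord 1 < T.ord (j + 1) then T.ord (j + 1) - 1
      else T.ord (j + 1)
    else 0
  parent_mem j hj₁ hj₂ := by
    have := T.parent_mem (j + 1) (by omega) (by omega)
    have := parent_succ_eq_eraseLeafParent T hj₁ hj₂
    omega
  ord_lt j hj₁ hj₂ := by
    rw [natCard_eq_card_children, if_pos ⟨hj₁, hj₂⟩]
    have hc := card_children_eraseLeafParent T (by omega) (eraseLeafParent T j)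
    rw [← parent_succ_eq_eraseLeafParent T hj₁ hj₂] at hc
    have := T.ord_lt_card_children (i := j + 1) (by omega) (by omega)
    have := ord_one_lt_and_ne_of_parent_eq T hj₁ hj₂
    split_ifs at hc ⊢ <;> omega
  ord_inj i j hi₁ hi₂ hj₁ hj₂ hp ho := by
    rw [if_pos (show 1 ≤ i ∧ i < n from ⟨hi₁, hi₂⟩),
      if_pos (show 1 ≤ j ∧ j < n from ⟨hj₁, hj₂⟩)] at ho
    have hpi := parent_succ_eq_eraseLeafParent T hi₁ hi₂
    have hpj := parent_succ_eq_eraseLeafParent T hj₁ hj₂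
    have hp' : T.parent (i + 1) = T.parent (j + 1) := by omega
    have := ord_one_lt_and_ne_of_parent_eq T hi₁ hi₂
    have := ord_one_lt_and_ne_of_parent_eq T hj₁ hj₂
    have ho' : T.ord (i + 1) = T.ord (j + 1) := by split_ifs at ho <;> omega
    have := T.ord_inj (i + 1) (j + 1) (by omega) (by omega) (by omega) (by omega) hp' ho'
    omega
  parent_out i hi := if_neg (by omega)
  ord_out i hi := if_neg (by omega)

theorem eraseLeaf_parent : (eraseLeaf T).parent = eraseLeafParent T := rfl

theorem eraseLeaf_ord {j : ℕ} (hj₁ : 1 ≤ j) (hj₂ : j < n) :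
    (eraseLeaf T).ord j =
      if T.parent (j + 1) = T.parent 1 ∧ T.ord 1 < T.ord (j + 1) then T.ord (j + 1) - 1
      else T.ord (j + 1) :=
  if_pos ⟨hj₁, hj₂⟩

theorem leaf_mem_slots_eraseLeaf (hn : 1 ≤ n) :
    (⟨T.parent 1 - 1, T.ord 1⟩ : Σ _ : ℕ, ℕ) ∈ slots (eraseLeaf T) := by
  have := T.parent_mem 1 le_rfl (by omega)
  have hc := card_children_eraseLeafParent T hn (T.parent 1 - 1)
  have := T.ord_lt_card_children le_rfl (by omega)
  rw [Nat.sub_add_cancel (by omega), if_pos rfl] at hc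
  rw [mk_mem_slots, eraseLeaf_parent]
  omega

end EraseLeaf

section Graft

variable (t : DPT n) (p k : ℕ)

def graftParent (i : ℕ) : ℕ :=
  if i = 1 then p + 1 else if 2 ≤ i ∧ i ≤ n then t.parent (i - 1) + 1 else 0

def graftOrd (i : ℕ) : ℕ :=
  if i = 1 then k
  else if 2 ≤ i ∧ i ≤ n then
    if t.parent (i - 1) = p ∧ k ≤ t.ord (i - 1) then t.ord (i - 1) + 1 else t.ord (i - 1)
  else 0

theorem graftParent_one : graftParent t p 1 = p + 1 := if_pos rfl

theorem graftOrd_one : graftOrd t p k 1 = k := if_pos rfl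

variable {t p k}

theorem graftParent_succ {j : ℕ} (hj₁ : 1 ≤ j) (hj₂ : j < n) :
    graftParent t p (j + 1) = t.parent j + 1 := by
  rw [graftParent, if_neg (by omega), if_pos (by omega), Nat.add_sub_cancel]

theorem graftOrd_succ {j : ℕ} (hj₁ : 1 ≤ j) (hj₂ : j < n) :
    graftOrd t p k (j + 1) =
      if t.parent j = p ∧ k ≤ t.ord j then t.ord j + 1 else t.ord j := by
  rw [graftOrd, if_neg (by omega), if_pos (by omega), Nat.add_sub_cancel]

theorem card_children_graftParent (hn : 1 ≤ n) (q : ℕ) :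
    #(children (n + 1) (graftParent t p) (q + 1)) =
      #(children n t.parent q) + if p = q then 1 else 0 := by
  rw [card_children_succ hn (fun _ => graftParent_succ) q, graftParent_one]
  simp

theorem eq_one_or_exists_eq_succ {i : ℕ} (hi₁ : 1 ≤ i) (hi₂ : i < n + 1) :
    i = 1 ∨ ∃ j, 1 ≤ j ∧ j < n ∧ i = j + 1 := by
  rcases Nat.lt_or_ge 1 i with h | h
  · exact Or.inr ⟨i - 1, by omega, by omega, by omega⟩
  · exact Or.inl (by omega)

/-- Attach a new leaf, labelled `1`, as the child of rank `k` of `p`, relabelling `j ↦ j + 1`. -/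
def graft (hs : (⟨p, k⟩ : Σ _ : ℕ, ℕ) ∈ slots t) : DPT (n + 1) where
  parent := graftParent t p
  ord := graftOrd t p k
  parent_mem i hi₁ hi₂ := by
    obtain ⟨hp₁, hp₂, -⟩ := mk_mem_slots.1 hs
    rcases eq_one_or_exists_eq_succ hi₁ hi₂ with rfl | ⟨j, hj₁, hj₂, rfl⟩
    · rw [graftParent_one]
      omega
    · have := t.parent_mem j hj₁ hj₂
      rw [graftParent_succ hj₁ hj₂]
      omega
  ord_lt i hi₁ hi₂ := by
    obtain ⟨hp₁, hp₂, hk⟩ := mk_mem_slots.1 hs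
    rw [natCard_eq_card_children]
    rcases eq_one_or_exists_eq_succ hi₁ hi₂ with rfl | ⟨j, hj₁, hj₂, rfl⟩
    · rw [graftParent_one, graftOrd_one, card_children_graftParent (by omega), if_pos rfl]
      omega
    · have := t.ord_lt_card_children hj₁ hj₂
      rw [graftParent_succ hj₁ hj₂, graftOrd_succ hj₁ hj₂, card_children_graftParent (by omega)]
      split_ifs <;> omega
  ord_inj i j hi₁ hi₂ hj₁ hj₂ hp ho := by
    rcases eq_one_or_exists_eq_succ hi₁ hi₂ with rfl | ⟨a, ha₁, ha₂, rfl⟩ <;>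
      rcases eq_one_or_exists_eq_succ hj₁ hj₂ with rfl | ⟨b, hb₁, hb₂, rfl⟩
    · rfl
    · rw [graftParent_one, graftParent_succ hb₁ hb₂] at hp
      rw [graftOrd_one, graftOrd_succ hb₁ hb₂] at ho
      split_ifs at ho <;> omega
    · rw [graftParent_one, graftParent_succ ha₁ ha₂] at hp
      rw [graftOrd_one, graftOrd_succ ha₁ ha₂] at ho
      split_ifs at ho <;> omega
    · rw [graftParent_succ ha₁ ha₂, graftParent_succ hb₁ hb₂] at hp
      rw [graftOrd_succ ha₁ ha₂, graftOrd_succ hb₁ hb₂] at ho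
      have hp' : t.parent a = t.parent b := by omega
      have := t.ord_inj a b ha₁ ha₂ hb₁ hb₂ hp' (by split_ifs at ho <;> omega)
      omega
  parent_out i hi := by
    obtain ⟨hp₁, hp₂, -⟩ := mk_mem_slots.1 hs
    unfold graftParent
    split_ifs <;> omega
  ord_out i hi := by
    obtain ⟨hp₁, hp₂, -⟩ := mk_mem_slots.1 hs
    unfold graftOrd
    split_ifs <;> omega

theorem graft_parent (hs : (⟨p, k⟩ : Σ _ : ℕ, ℕ) ∈ slots t) :
    (graft hs).parent = graftParent t p := rfl

theorem graft_ord (hs : (⟨p, k⟩ : Σ _ : ℕ, ℕ) ∈ slots t) :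
    (graft hs).ord = graftOrd t p k := rfl

end Graft

theorem graft_eraseLeaf (hn : 1 ≤ n) (T : DPT (n + 1)) :
    graft (leaf_mem_slots_eraseLeaf T hn) = T := by
  have := T.parent_mem 1 le_rfl (by omega)
  refine ext_succ ⟨?_, ?_⟩ fun j hj₁ hj₂ => ⟨?_, ?_⟩
  · rw [graft_parent, graftParent_one]
    omega
  · rw [graft_ord, graftOrd_one]
  · rw [graft_parent, graftParent_succ hj₁ hj₂, eraseLeaf_parent,
      parent_succ_eq_eraseLeafParent T hj₁ hj₂]
  · have := parent_succ_eq_eraseLeafParent T hj₁ hj₂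
    have := ord_one_lt_and_ne_of_parent_eq T hj₁ hj₂
    rw [graft_ord, graftOrd_succ hj₁ hj₂, eraseLeaf_parent, eraseLeaf_ord T hj₁ hj₂]
    split_ifs <;> omega

theorem eraseLeaf_graft {t : DPT n} {p k : ℕ} (hs : (⟨p, k⟩ : Σ _ : ℕ, ℕ) ∈ slots t) :
    eraseLeaf (graft hs) = t := by
  refine ext_of_agree fun j hj₁ hj₂ => ⟨?_, ?_⟩
  · have := parent_succ_eq_eraseLeafParent (graft hs) hj₁ hj₂
    rw [graft_parent, graftParent_succ hj₁ hj₂] at this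
    rw [eraseLeaf_parent]
    omega
  · rw [eraseLeaf_ord _ hj₁ hj₂, graft_parent, graft_ord, graftParent_one,
      graftParent_succ hj₁ hj₂, graftOrd_one, graftOrd_succ hj₁ hj₂]
    split_ifs <;> omega

def eraseLeafEquiv (hn : 1 ≤ n) : DPT (n + 1) ≃ Σ t : DPT n, slots t where
  toFun T := ⟨eraseLeaf T, _, leaf_mem_slots_eraseLeaf T hn⟩
  invFun s := graft s.2.2
  left_inv := graft_eraseLeaf hn
  right_inv := fun ⟨_, _, hs⟩ => Sigma.subtype_ext (eraseLeaf_graft hs) <| by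
    simp [graft_parent, graft_ord, graftParent_one, graftOrd_one]

instance : Subsingleton (DPT 1) :=
  ⟨fun _ _ => ext_of_agree fun _ hi₁ hi₂ => absurd hi₂ (by omega)⟩

theorem card_one : Nat.card (DPT 1) = 1 :=
  Nat.card_eq_one_iff_unique.2
    ⟨inferInstance, ⟨⟨0, 0, by omega, by omega, by omega, fun _ _ => rfl, fun _ _ => rfl⟩⟩⟩

theorem finite (hn : 1 ≤ n) : Finite (DPT n) := by
  induction n, hn using Nat.le_induction with
  | base => infer_instance
  | succ n hn ih =>
    have := ih
    exact Finite.of_equiv _ (eraseLeafEquiv hn).symm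

theorem card_succ (hn : 1 ≤ n) : Nat.card (DPT (n + 1)) = (2 * n - 1) * Nat.card (DPT n) := by
  have := finite hn
  have := Fintype.ofFinite (DPT n)
  rw [Nat.card_congr (eraseLeafEquiv hn), Nat.card_sigma]
  simp_rw [Nat.card_eq_finsetCard, card_slots hn]
  rw [sum_const, card_univ, smul_eq_mul, Nat.card_eq_fintype_card, mul_comm]

theorem card_eq_doubleFactorial (hn : 1 ≤ n) : Nat.card (DPT n) = (2 * n - 3)‼ := by
  induction n, hn using Nat.le_induction with
  | base => exact card_one
  | succ n hn ih =>
    rw [card_succ hn, ih, show 2 * (n + 1) - 3 = 2 * n - 2 + 1 by omega,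
      Nat.doubleFactorial_add_one, show 2 * n - 2 - 1 = 2 * n - 3 by omega,
      show 2 * n - 2 + 1 = 2 * n - 1 by omega]

end DPT

theorem Nat.factorial_two_mul_eq_mul_doubleFactorial (k : ℕ) :
    (2 * k)! = k ! * 2 ^ k * (2 * k - 1)‼ := by
  cases k with
  | zero => rfl
  | succ m =>
    rw [show 2 * (m + 1) - 1 = 2 * m + 1 by omega, show 2 * (m + 1) = 2 * m + 1 + 1 by ring,
      Nat.factorial_eq_mul_doubleFactorial, show 2 * m + 1 + 1 = 2 * (m + 1) by ring,
      Nat.doubleFactorial_two_mul]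
    ring

theorem stmt9 (n : ℕ) (hn : 1 ≤ n) :
    Nat.card (DPT n) =
      Nat.factorial (2 * n - 2) / (Nat.factorial (n - 1) * 2 ^ (n - 1)) ∧
    Nat.card (DPT n) = Nat.doubleFactorial (2 * n - 3) := by
  refine ⟨?_, DPT.card_eq_doubleFactorial hn⟩
  obtain ⟨k, rfl⟩ : ∃ k, n = k + 1 := ⟨n - 1, by omega⟩
  rw [DPT.card_eq_doubleFactorial hn, show 2 * (k + 1) - 2 = 2 * k by omega,
    show 2 * (k + 1) - 3 = 2 * k - 1 by omega, Nat.add_sub_cancel,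
    Nat.factorial_two_mul_eq_mul_doubleFactorial, Nat.mul_div_cancel_left _ (by positivity)]
end
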